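/- arXiv:1710.10510 — 6 statements merged into one kernel-verified Lean document; each statement's English description precedes it below -/
import Mathlib

section
/- Let X and Y be topological spaces, φ : C_p(X) → C_p(Y) a uniformly continuous surjection, and suppose that to a point y ∈ Y one assigns a finite set K(y) ⊆ X and a real number a_y = sup{|φ(f)(y) − φ(g)(y)| : f, g ∈ C_p(X), ∀x ∈ K(y), |f(x) − g(x)| < 1} < ∞. Then for every n ∈ ℕ and f, g ∈ C_p(X): if |f(x) − g(x)| < n for each x ∈ K(y), then |φ(f)(y) − φ(g)(y)| ≤ n·a_y. -/
/-- `C_p(X)`: continuous real-valued functions on `X` with the topology (and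
uniformity) of pointwise convergence, realized as a subspace of `X → ℝ` with
the product uniformity. -/
def Cp (X : Type*) [TopologicalSpace X] : Type _ := {f : X → ℝ // Continuous f}

instance (X : Type*) [TopologicalSpace X] : UniformSpace (Cp X) :=
  inferInstanceAs (UniformSpace {f : X → ℝ // Continuous f})

/-!
Join `f` to `g` by the points `f_k = f + (k/n)(g - f)`, `k = 0, …, n`, of the segment between
them. If `|f - g| < n` on `K`, consecutive points differ by less than `1` on `K`, so their images
at `y` differ by at most `a_y`, and the triangle inequality along the chain gives `n · a_y`.
For `n = 0` the hypothesis forces `K = ∅`; then every pair is admissible, and surjectivity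
makes the oscillation at `y` unbounded, so no such `a_y` exists.
-/

namespace Cp

variable {X : Type*} [TopologicalSpace X]

def lineMap (f g : Cp X) (t : ℝ) : Cp X :=
  ⟨fun x => f.1 x + t * (g.1 x - f.1 x), f.2.add (continuous_const.mul (g.2.sub f.2))⟩

@[simp]
lemma lineMap_zero (f g : Cp X) : lineMap f g 0 = f :=
  Subtype.ext <| funext fun x => by simp [lineMap]

@[simp]
lemma lineMap_one (f g : Cp X) : lineMap f g 1 = g :=
  Subtype.ext <| funext fun x => by simp [lineMap]

lemma lineMap_apply_sub_lineMap_apply (f g : Cp X) (s t : ℝ) (x : X) :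
    (lineMap f g s).1 x - (lineMap f g t).1 x = (t - s) * (f.1 x - g.1 x) := by
  simp only [lineMap]
  ring

theorem abs_sub_le_mul_of_forall_abs_sub_le {ψ : Cp X → ℝ} {K : Set X} {a : ℝ}
    (hψ : ∀ u v : Cp X, (∀ x ∈ K, |u.1 x - v.1 x| < 1) → |ψ u - ψ v| ≤ a)
    {n : ℕ} (hn : 0 < n) {f g : Cp X} (hfg : ∀ x ∈ K, |f.1 x - g.1 x| < n) :
    |ψ f - ψ g| ≤ n * a := by
  have hn' : (0 : ℝ) < n := Nat.cast_pos.2 hn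
  let u : ℕ → ℝ := fun k => ψ (lineMap f g (k / n))
  have hu0 : u 0 = ψ f := by simp [u]
  have hun : u n = ψ g := by simp [u, div_self hn'.ne']
  have hstep : ∀ k < n, dist (u k) (u (k + 1)) ≤ a := fun k _ => by
    refine hψ _ _ fun x hx => ?_
    rw [lineMap_apply_sub_lineMap_apply, Nat.cast_succ, add_div, add_sub_cancel_left, abs_mul,
      abs_of_pos (one_div_pos.2 hn'), one_div_mul_eq_div, div_lt_one hn']
    exact hfg x hx
  calc |ψ f - ψ g| = dist (u 0) (u n) := by rw [hu0, hun, Real.dist_eq]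
    _ ≤ ∑ _k ∈ Finset.range n, a := dist_le_range_sum_of_dist_le n fun {k} => hstep k
    _ = n * a := by simp

end Cp

lemma Function.Surjective.exists_lt_abs_apply_sub {X Y : Type*} [TopologicalSpace X]
    [TopologicalSpace Y] {φ : Cp X → Cp Y} (hφ : Function.Surjective φ) (y : Y) (a c : ℝ) :
    ∃ u : Cp X, a < |(φ u).1 y - c| := by
  obtain ⟨u, hu⟩ := hφ ⟨fun _ => a + 1 + c, continuous_const⟩
  refine ⟨u, ?_⟩
  rw [hu, add_sub_cancel_right]
  exact (lt_add_one a).trans_le (le_abs_self _)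

theorem gulko_support_lipschitz_general {X Y : Type*} [TopologicalSpace X] [TopologicalSpace Y]
    (φ : Cp X → Cp Y) (hsurj : Function.Surjective φ)
    (y : Y) (K : Set X) (a : ℝ)
    (ha : IsLUB {r : ℝ | ∃ f g : Cp X,
        (∀ x ∈ K, |f.1 x - g.1 x| < 1) ∧ r = |(φ f).1 y - (φ g).1 y|} a)
    (n : ℕ) (f g : Cp X) (hfg : ∀ x ∈ K, |f.1 x - g.1 x| < (n : ℝ)) :
    |(φ f).1 y - (φ g).1 y| ≤ (n : ℝ) * a := by
  have hosc : ∀ u v : Cp X, (∀ x ∈ K, |u.1 x - v.1 x| < 1) →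
      |(φ u).1 y - (φ v).1 y| ≤ a :=
    fun u v huv => ha.1 ⟨u, v, huv, rfl⟩
  rcases n.eq_zero_or_pos with rfl | hn
  · obtain ⟨u, hu⟩ := hsurj.exists_lt_abs_apply_sub y a ((φ f).1 y)
    have hK : ∀ x ∈ K, |u.1 x - f.1 x| < 1 := fun x hx =>
      absurd (hfg x hx) (by simp)
    exact absurd (hosc u f hK) hu.not_ge
  · exact Cp.abs_sub_le_mul_of_forall_abs_sub_le hosc hn hfg

theorem gulko_support_lipschitz {X Y : Type*} [TopologicalSpace X] [TopologicalSpace Y]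
    (φ : Cp X → Cp Y) (hφ : UniformContinuous φ) (hsurj : Function.Surjective φ)
    (y : Y) (K : Set X) (hK : K.Finite) (a : ℝ)
    (ha : IsLUB {r : ℝ | ∃ f g : Cp X,
        (∀ x ∈ K, |f.1 x - g.1 x| < 1) ∧ r = |(φ f).1 y - (φ g).1 y|} a)
    (n : ℕ) (f g : Cp X) (hfg : ∀ x ∈ K, |f.1 x - g.1 x| < (n : ℝ)) :
    |(φ f).1 y - (φ g).1 y| ≤ (n : ℝ) * a :=
  gulko_support_lipschitz_general φ hsurj y K a ha n f g hfg
end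

section
/- Let X, Y be Tychonoff spaces and φ : C_p(X) → C_p(Y) a uniformly continuous surjection with φ(0) = 0. Suppose to each y ∈ Y is assigned a nonempty finite set K(y) ⊆ X and a real a_y ≥ 0 such that for all f, g ∈ C_p(X) and all n ∈ ℕ: |f − g| < n on K(y) implies |φ(f)(y) − φ(g)(y)| ≤ n·a_y. If A ⊆ X is a bounded set (i.e., f(A) is bounded in ℝ for every f ∈ C_p(X)), then the set K_A = {y ∈ Y : K(y) ⊆ A} is bounded in Y. -/
/-- A set `A ⊆ X` is bounded if `f(A)` is bounded in `ℝ` for every continuous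
real-valued function `f` on `X`. -/
def CpBounded {X : Type*} [TopologicalSpace X] (A : Set X) : Prop :=
  ∀ f : Cp X, ∃ M : ℝ, ∀ x ∈ A, |f.1 x| ≤ M

theorem gulko_support_transfers_boundedness
    {X Y : Type*} [TopologicalSpace X] [CompletelyRegularSpace X] [T1Space X]
    [TopologicalSpace Y] [CompletelyRegularSpace Y] [T1Space Y]
    (φ : Cp X → Cp Y) (hφ : UniformContinuous φ) (hsurj : Function.Surjective φ)
    (hzero : φ ⟨fun _ => 0, continuous_const⟩ = ⟨fun _ => 0, continuous_const⟩)
    (K : Y → Set X) (hKne : ∀ y, (K y).Nonempty) (hKfin : ∀ y, (K y).Finite)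
    (a : Y → ℝ) (ha0 : ∀ y, 0 ≤ a y)
    (hlip : ∀ (y : Y) (f g : Cp X) (n : ℕ),
      (∀ x ∈ K y, |f.1 x - g.1 x| < (n : ℝ)) →
        |(φ f).1 y - (φ g).1 y| ≤ (n : ℝ) * a y)
    (A : Set X) (hA : CpBounded A) :
    CpBounded {y : Y | K y ⊆ A} := by
  intro h
  by_contra hcon
  push_neg at hcon
  choose F hFS hFgt using hcon
  set t : ℕ → ℝ := fun k => |h.1 (F (k : ℝ))| with ht_def
  have ht : ∀ k : ℕ, (k : ℝ) < t k := fun k => hFgt (k : ℝ)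
  set c : ℕ → ℝ := fun k => ((k : ℝ) + 1) * (1 + a (F (k : ℝ))) with hc_def
  have hc0 : ∀ k, 0 ≤ c k := fun k =>
    mul_nonneg (by positivity) (by linarith [ha0 (F ((k : ℕ) : ℝ))])
  set tent : ℕ → ℝ → ℝ := fun k x => c k * max 0 (1 - 4 * |x - t k|) with htent
  have tent_nonneg : ∀ k x, 0 ≤ tent k x := fun k x =>
    mul_nonneg (hc0 k) (le_max_left _ _)
  have tent_zero : ∀ (k : ℕ) (x : ℝ), x + 1 ≤ t k → tent k x = 0 := by
    intro k x hx
    have h1 : (1 : ℝ) ≤ |x - t k| := by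
      rw [abs_sub_comm, abs_of_nonneg (by linarith)]; linarith
    have h2 : max 0 (1 - 4 * |x - t k|) = 0 := max_eq_left (by linarith)
    simp only [htent, h2, mul_zero]
  set g : ℝ → ℝ := fun x => ∑ k ∈ Finset.range (⌈x⌉₊ + 1), tent k x with hg_def
  have key : ∀ (N : ℕ) (x : ℝ), x < N → g x = ∑ k ∈ Finset.range (N + 1), tent k x := by
    intro N x hx
    apply Finset.sum_subset
    · intro k hk
      simp only [Finset.mem_range] at *
      have : ⌈x⌉₊ ≤ N := Nat.ceil_le.mpr hx.le
      omega
    · intro k hk hk'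
      simp only [Finset.mem_range, not_lt] at hk'
      apply tent_zero
      have hxc : x ≤ (⌈x⌉₊ : ℝ) := Nat.le_ceil x
      have hkc : ((⌈x⌉₊ : ℕ) : ℝ) + 1 ≤ (k : ℝ) := by exact_mod_cast hk'
      linarith [ht k]
  have hgc : Continuous g := by
    rw [continuous_iff_continuousAt]
    intro x
    have hx : x < ((⌈x⌉₊ + 1 : ℕ) : ℝ) := by
      push_cast; linarith [Nat.le_ceil x]
    have hcont : Continuous fun z : ℝ => ∑ k ∈ Finset.range ((⌈x⌉₊ + 1) + 1), tent k z := by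
      apply continuous_finset_sum
      intro k _
      simp only [htent]
      fun_prop
    apply hcont.continuousAt.congr
    filter_upwards [Iio_mem_nhds hx] with z hz
    exact (key (⌈x⌉₊ + 1) z hz).symm
  have hgt : ∀ k : ℕ, c k ≤ g (t k) := by
    intro k
    have hk : k ∈ Finset.range (⌈t k⌉₊ + 1) := by
      simp only [Finset.mem_range]
      have h1 : (k : ℝ) ≤ (⌈t k⌉₊ : ℝ) := le_trans (ht k).le (Nat.le_ceil _)
      have h2 : k ≤ ⌈t k⌉₊ := by exact_mod_cast h1
      omega
    have hsum := Finset.single_le_sum (f := fun j => tent j (t k))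
      (fun j _ => tent_nonneg j (t k)) hk
    have htk : tent k (t k) = c k := by
      simp [htent]
    calc c k = tent k (t k) := htk.symm
      _ ≤ ∑ j ∈ Finset.range (⌈t k⌉₊ + 1), tent j (t k) := hsum
      _ = g (t k) := rfl
  have hgnn : ∀ x, 0 ≤ g x := fun x =>
    Finset.sum_nonneg (fun j _ => tent_nonneg j x)
  set u : Cp Y := ⟨fun z => g |h.1 z|, hgc.comp h.2.abs⟩ with hu
  obtain ⟨f, hf⟩ := hsurj u
  obtain ⟨M, hM⟩ := hA f
  set n : ℕ := ⌈M⌉₊ + 1 with hn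
  have hMn : M < (n : ℝ) := by
    have := Nat.le_ceil M
    calc M ≤ (⌈M⌉₊ : ℝ) := Nat.le_ceil M
      _ < (n : ℝ) := by rw [hn]; push_cast; linarith
  have hbound := hlip (F ((n : ℕ) : ℝ)) f ⟨fun _ => 0, continuous_const⟩ n ?_
  · rw [hf, hzero] at hbound
    have hu1 : u.1 (F ((n : ℕ) : ℝ)) = g (t n) := rfl
    have hge : c n ≤ u.1 (F ((n : ℕ) : ℝ)) := by rw [hu1]; exact hgt n
    have habs : |u.1 (F ((n : ℕ) : ℝ)) - 0| = u.1 (F ((n : ℕ) : ℝ)) := by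
      rw [sub_zero, abs_of_nonneg]; rw [hu1]; exact hgnn (t n)
    rw [habs] at hbound
    have hfin : c n ≤ (n : ℝ) * a (F ((n : ℕ) : ℝ)) := le_trans hge hbound
    have hfin' : ((n : ℕ) : ℝ) * a (F ((n : ℕ) : ℝ)) + ((n : ℕ) : ℝ) + a (F ((n : ℕ) : ℝ)) + 1 ≤ ((n : ℕ) : ℝ) * a (F ((n : ℕ) : ℝ)) := by
      have : c n = (((n : ℕ) : ℝ) + 1) * (1 + a (F ((n : ℕ) : ℝ))) := rfl
      nlinarith [hfin, this]
    have ha := ha0 (F ((n : ℕ) : ℝ))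
    have hnn : (0 : ℝ) ≤ (n : ℝ) := Nat.cast_nonneg n
    linarith [hfin']
  · intro x hx
    have hxA : x ∈ A := hFS ((n : ℕ) : ℝ) hx
    have := hM x hxA
    simp only [sub_zero]
    linarith
end

section
/- Let X be a pseudocompact Tychonoff space and φ : C_p(X) → C_p(Y) a uniformly continuous surjection onto the function space of a Tychonoff space Y. Then Y is pseudocompact. -/
open Filter Set Topology Uniformity

/-- A space is pseudocompact if every continuous real-valued function on it is
bounded. -/
def Pseudocompact (X : Type*) [TopologicalSpace X] : Prop :=
  ∀ f : X → ℝ, Continuous f → ∃ M : ℝ, ∀ x : X, |f x| ≤ M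


/-- Build a continuous nonnegative function on ℝ dominating prescribed values `d n`
at points `t n`, where `t n > n`. -/
lemma exists_dominating (t : ℕ → ℝ) (ht : ∀ n : ℕ, (n : ℝ) < t n)
    (d : ℕ → ℝ) (hd : ∀ n, 0 < d n) :
    ∃ θ : ℝ → ℝ, Continuous θ ∧ (∀ s, 0 ≤ θ s) ∧ ∀ n, d n ≤ θ (t n) := by
  set ψ : ℕ → ℝ → ℝ := fun k s => d k * max 0 (min 1 (s - t k + 1)) with hψ
  have hψc : ∀ k, Continuous (ψ k) := by
    intro k
    exact continuous_const.mul (continuous_const.max (continuous_const.min (by continuity)))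
  have hψ0 : ∀ k s, 0 ≤ ψ k s := fun k s =>
    mul_nonneg (hd k).le (le_max_left _ _)
  have hψzero : ∀ (k : ℕ) (s : ℝ), s + 1 ≤ (k : ℝ) → ψ k s = 0 := by
    intro k s hk
    have h1 : s - t k + 1 < 0 := by
      have := ht k; linarith
    have hle : min 1 (s - t k + 1) ≤ 0 := le_trans (min_le_right _ _) h1.le
    simp only [hψ]
    rw [max_eq_left hle, mul_zero]
  set θ : ℝ → ℝ := fun s => ∑ k ∈ Finset.range (⌈s⌉₊ + 1), ψ k s with hθ
  have stab : ∀ s : ℝ, ∀ N : ℕ, ⌈s⌉₊ + 1 ≤ N → θ s = ∑ k ∈ Finset.range N, ψ k s := by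
    intro s N hN
    refine Finset.sum_subset (Finset.range_subset_range.2 hN) ?_
    intro k hk hk2
    simp only [Finset.mem_range, not_lt] at hk2
    apply hψzero
    have h1 : (⌈s⌉₊ + 1 : ℕ) ≤ k := le_trans (le_refl _) hk2
    have h2 : ((⌈s⌉₊ + 1 : ℕ) : ℝ) ≤ (k : ℝ) := by exact_mod_cast h1
    have := Nat.le_ceil s
    push_cast at h2
    linarith
  refine ⟨θ, ?_, ?_, ?_⟩
  · rw [continuous_iff_continuousAt]
    intro s₀
    have hmem : Iio (s₀ + 1) ∈ 𝓝 s₀ := Iio_mem_nhds (lt_add_one s₀)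
    have heq : ∀ s ∈ Iio (s₀ + 1), θ s = ∑ k ∈ Finset.range (⌈s₀⌉₊ + 2), ψ k s := by
      intro s hs
      apply stab
      have : s ≤ ((⌈s₀⌉₊ + 1 : ℕ) : ℝ) := by
        push_cast
        have := Nat.le_ceil s₀
        have : s < s₀ + 1 := hs
        linarith [Nat.le_ceil s₀]
      have : ⌈s⌉₊ ≤ ⌈s₀⌉₊ + 1 := Nat.ceil_le.2 this
      omega
    have hc : ContinuousAt (fun s => ∑ k ∈ Finset.range (⌈s₀⌉₊ + 2), ψ k s) s₀ :=
      (continuous_finset_sum _ fun k _ => hψc k).continuousAt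
    apply hc.congr
    exact Filter.eventuallyEq_of_mem hmem fun s hs => (heq s hs).symm
  · intro s
    exact Finset.sum_nonneg fun k _ => hψ0 k s
  · intro n
    have hmem : n ∈ Finset.range (⌈t n⌉₊ + 1) := by
      rw [Finset.mem_range]
      have h1 : (n : ℝ) < (⌈t n⌉₊ : ℝ) := lt_of_lt_of_le (ht n) (Nat.le_ceil _)
      have : n < ⌈t n⌉₊ := by exact_mod_cast h1
      omega
    have : ψ n (t n) = d n := by
      have : min 1 (t n - t n + 1) = 1 := by norm_num
      simp [hψ, this]
    calc d n = ψ n (t n) := this.symm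
    _ ≤ θ (t n) := Finset.single_le_sum (fun k _ => hψ0 k (t n)) hmem



lemma key_bound {X Y : Type*} [TopologicalSpace X] [TopologicalSpace Y]
    (φ : Cp X → Cp Y) (hφ : UniformContinuous φ) (z : Y) (n : ℕ) :
    ∃ C : ℝ, ∀ f : Cp X, (∀ x, |f.1 x| ≤ (n : ℝ)) → |(φ f).1 z| ≤ C := by
  classical
  -- the evaluation at z is uniformly continuous on Cp Y
  have he : UniformContinuous (fun u : Cp Y => u.1 z) :=
    (Pi.uniformContinuous_proj _ z).comp uniformContinuous_subtype_val
  have hU : {p : Cp Y × Cp Y | dist (p.1.1 z) (p.2.1 z) < 1} ∈ 𝓤 (Cp Y) :=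
    he (Metric.dist_mem_uniformity one_pos)
  have hV : {p : Cp X × Cp X | dist ((φ p.1).1 z) ((φ p.2).1 z) < 1} ∈ 𝓤 (Cp X) :=
    hφ hU
  have hV' : {p : Cp X × Cp X | dist ((φ p.1).1 z) ((φ p.2).1 z) < 1} ∈
      Filter.comap (fun q : Cp X × Cp X => (q.1.1, q.2.1)) (𝓤 (X → ℝ)) := hV
  obtain ⟨W, hW, hWsub⟩ := (Filter.mem_comap).1 hV'
  rw [Pi.uniformity] at hW
  obtain ⟨I, hIfin, Vx, hVx, hVuniv, -, hWeq⟩ := Filter.mem_iInf'.1 hW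
  -- choose an ε for each coordinate
  have hx : ∀ x : X, ∃ ε : ℝ, 0 < ε ∧
      ∀ p : (X → ℝ) × (X → ℝ), dist (p.1 x) (p.2 x) < ε → p ∈ Vx x := by
    intro x
    obtain ⟨S, hS, hSsub⟩ := (Filter.mem_comap).1 (hVx x)
    obtain ⟨ε, hε, hεS⟩ := Metric.mem_uniformity_dist.1 hS
    exact ⟨ε, hε, fun p hp => hSsub (hεS hp)⟩
  choose ε hεpos hε using hx
  set F : Finset X := hIfin.toFinset with hF
  set δ : ℝ := if h : F.Nonempty then F.inf' h ε else 1 with hδdef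
  have hδpos : 0 < δ := by
    rw [hδdef]
    split_ifs with h
    · exact (Finset.lt_inf'_iff h).2 fun x _ => hεpos x
    · norm_num
  have hδle : ∀ x ∈ I, δ ≤ ε x := by
    intro x hxI
    have hxF : x ∈ F := hIfin.mem_toFinset.2 hxI
    rw [hδdef]
    rw [dif_pos ⟨x, hxF⟩]
    exact Finset.inf'_le ε hxF
  set m : ℕ := ⌈(n : ℝ) / δ⌉₊ + 1 with hm
  have hmpos : 0 < m := Nat.succ_pos _
  have hmR : (0 : ℝ) < (m : ℝ) := by exact_mod_cast hmpos
  have hnm : (n : ℝ) / m < δ := by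
    have h1 : (n : ℝ) / δ < m := by
      calc (n : ℝ) / δ ≤ ⌈(n : ℝ) / δ⌉₊ := Nat.le_ceil _
      _ < m := by exact_mod_cast Nat.lt_succ_self _
    rw [div_lt_iff₀ hmR]
    rw [div_lt_iff₀ hδpos] at h1
    linarith [mul_comm δ (m : ℝ)]
  set z₀ : Cp X := ⟨fun _ => 0, continuous_const⟩ with hz₀
  refine ⟨|(φ z₀).1 z| + m, ?_⟩
  intro f hf
  set s : ℕ → Cp X := fun j => ⟨fun x => (j : ℝ) / m * f.1 x,
    (continuous_const.mul f.2)⟩ with hs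
  have hstep : ∀ j : ℕ, dist ((φ (s j)).1 z) ((φ (s (j + 1))).1 z) < 1 := by
    intro j
    have hmemW : (s j, s (j + 1)) ∈ (fun q : Cp X × Cp X => (q.1.1, q.2.1)) ⁻¹' W := by
      show ((s j).1, (s (j + 1)).1) ∈ W
      rw [hWeq]
      refine mem_iInter.2 fun x => ?_
      by_cases hxI : x ∈ I
      swap
      · rw [hVuniv x hxI]; exact mem_univ _
      apply hε x
      have : (s j).1 x - (s (j + 1)).1 x = -(f.1 x / m) := by
        simp only [hs]
        push_cast
        ring
      rw [Real.dist_eq, this, abs_neg, abs_div, abs_of_pos hmR]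
      calc |f.1 x| / m ≤ (n : ℝ) / m := by gcongr; exact hf x
          _ < δ := hnm
          _ ≤ ε x := hδle x hxI
    exact hWsub hmemW
  have htel : ∀ j : ℕ, |(φ (s j)).1 z - (φ (s 0)).1 z| ≤ (j : ℝ) := by
    intro j
    induction j with
    | zero => simp
    | succ j ih =>
      have h1 := hstep j
      rw [Real.dist_eq] at h1
      have : |(φ (s (j + 1))).1 z - (φ (s 0)).1 z| ≤
          |(φ (s (j + 1))).1 z - (φ (s j)).1 z| + |(φ (s j)).1 z - (φ (s 0)).1 z| := by
        have := abs_sub_abs_le_abs_sub ((φ (s (j+1))).1 z) ((φ (s j)).1 z)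
        exact abs_sub_le _ _ _
      rw [abs_sub_comm] at h1
      push_cast
      linarith
  have hsm : s m = f := by
    apply Subtype.ext
    funext x
    simp only [hs]
    rw [div_self (ne_of_gt hmR), one_mul]
  have hs0 : s 0 = z₀ := by
    apply Subtype.ext
    funext x
    simp [hs, hz₀]
  have := htel m
  rw [hsm, hs0] at this
  calc |(φ f).1 z| ≤ |(φ f).1 z - (φ z₀).1 z| + |(φ z₀).1 z| := by
        have := abs_sub_le ((φ f).1 z) ((φ z₀).1 z) 0
        simp at this ⊢
        linarith [abs_sub_le ((φ f).1 z) ((φ z₀).1 z) 0]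
  _ ≤ (m : ℝ) + |(φ z₀).1 z| := by linarith
  _ = |(φ z₀).1 z| + m := by ring

theorem pseudocompact_of_uniformly_continuous_surjection
    {X Y : Type*} [TopologicalSpace X] [CompletelyRegularSpace X] [T1Space X]
    [TopologicalSpace Y] [CompletelyRegularSpace Y] [T1Space Y]
    (hX : Pseudocompact X)
    (φ : Cp X → Cp Y) (hφ : UniformContinuous φ) (hsurj : Function.Surjective φ) :
    Pseudocompact Y := by
  intro g hg
  by_contra hcon
  push_neg at hcon
  -- choose points where |g| is large
  have hpts : ∀ n : ℕ, ∃ y : Y, (n : ℝ) < |g y| := by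
    intro n
    obtain ⟨y, hy⟩ := hcon (n : ℝ)
    exact ⟨y, hy⟩
  choose y hy using hpts
  -- the bounds from uniform continuity
  have hkey := fun (z : Y) (n : ℕ) => key_bound φ hφ z n
  choose C hC using hkey
  -- every u in Cp Y is pointwise dominated by C · n for some n
  have hP : ∀ u : Cp Y, ∃ n : ℕ, ∀ z : Y, |u.1 z| ≤ C z n := by
    intro u
    obtain ⟨f, rfl⟩ := hsurj u
    obtain ⟨M, hM⟩ := hX f.1 f.2
    refine ⟨⌈M⌉₊, fun z => hC z ⌈M⌉₊ f fun x => ?_⟩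
    exact le_trans (hM x) (Nat.le_ceil M)
  -- build a continuous function beating all bounds
  set t : ℕ → ℝ := fun n => |g (y n)| with ht0
  set d : ℕ → ℝ := fun n => (∑ k ∈ Finset.range (n + 1), |C (y k) k|) + 1 with hd0
  have hdpos : ∀ n, 0 < d n := by
    intro n
    have : (0 : ℝ) ≤ ∑ k ∈ Finset.range (n + 1), |C (y k) k| :=
      Finset.sum_nonneg fun k _ => abs_nonneg _
    simp only [hd0]
    linarith
  have hdgt : ∀ n, C (y n) n < d n := by
    intro n
    have h1 : |C (y n) n| ≤ ∑ k ∈ Finset.range (n + 1), |C (y k) k| :=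
      Finset.single_le_sum (fun k _ => abs_nonneg (C (y k) k))
        (Finset.self_mem_range_succ n)
    have h2 := le_abs_self (C (y n) n)
    simp only [hd0]
    linarith
  obtain ⟨θ, hθc, hθ0, hθge⟩ := exists_dominating t (fun n => hy n) d hdpos
  set h : Y → ℝ := fun w => θ |g w| with hhdef
  have hhc : Continuous h := hθc.comp (hg.abs)
  obtain ⟨n₀, hn₀⟩ := hP ⟨h, hhc⟩
  have h1 : |h (y n₀)| ≤ C (y n₀) n₀ := hn₀ (y n₀)
  have h2 : d n₀ ≤ h (y n₀) := hθge n₀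
  have h3 : h (y n₀) ≤ |h (y n₀)| := le_abs_self _
  have := hdgt n₀
  linarith
end

section
/- Let K be a compact metrizable space. Then K is strongly countable-dimensional if and only if its fd-height is countable, i.e., there exists an ordinal α < ω₁ with K^{[α]} = ∅. -/
/-!
If `K = ⋃ Fₙ` with `Fₙ` closed and finite-dimensional, then by the Baire category theorem every
nonempty closed `Y ⊆ K` has a nonempty relatively open subset inside a single `Fₙ`. Being a
countable union of closed subsets of `Fₙ`, it is finite-dimensional by the countable closed sum
theorem, so it lies in `I(Y)`. Hence every nonempty derivative `K^{[α]}` strictly shrinks at the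
next step; choosing for each `α` a member of a countable base that meets `K^{[α]}` but misses
`K^{[α+1]}` gives an injective map, so the derivatives must vanish at a countable stage.

Conversely, every point leaves the derivatives at a stage `γ < α`, inside `I(K^{[γ]})`. By the
Lindelöf property `I(K^{[γ]})` is covered by countably many relatively open finite-dimensional
subsets of `K^{[γ]}`, each of which is a countable union of closed finite-dimensional sets.
-/

open Set

/-- Covering dimension at most `n`: every finite open cover admits an open
shrinking (refinement indexed by the same set) of order at most `n + 1`. -/
def CovDimLE (X : Type*) [TopologicalSpace X] (n : ℕ) : Prop :=
  ∀ (ι : Type) (U : ι → Set X), Finite ι → (∀ i, IsOpen (U i)) →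
    (⋃ i, U i) = univ →
    ∃ V : ι → Set X, (∀ i, IsOpen (V i) ∧ V i ⊆ U i) ∧ (⋃ i, V i) = univ ∧
      ∀ x : X, {i | x ∈ V i}.Finite ∧ {i | x ∈ V i}.ncard ≤ n + 1

/-- A space is finite-dimensional if its covering dimension is at most `n`
for some `n`. -/
def TopFiniteDim (X : Type*) [TopologicalSpace X] : Prop :=
  ∃ n : ℕ, CovDimLE X n

/-- `I(Y)`: the union of all subsets of `Y` which are open in `Y` and
finite-dimensional (in the subspace topology). -/
def fdKernel {X : Type*} [TopologicalSpace X] (Y : Set X) : Set X :=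
  ⋃₀ {U : Set X | U ⊆ Y ∧ (∃ V : Set X, IsOpen V ∧ U = V ∩ Y) ∧ TopFiniteDim ↥U}

/-- The `α`-th fd-derivative `X^{[α]}`. -/
noncomputable def fdDeriv (X : Type*) [TopologicalSpace X] (α : Ordinal) : Set X :=
  Ordinal.limitRecOn α univ (fun _ S => S \ fdKernel S)
    (fun o _ ih => ⋂ β, ⋂ h : β < o, ih β h)

open Topology TopologicalSpace Set.Notation

section CoveringDimension

variable {X : Type*} [TopologicalSpace X]

theorem covDimLE_of_isEmpty [IsEmpty X] (n : ℕ) : CovDimLE X n :=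
  fun _ U _ hUo hUc => ⟨U, fun i => ⟨hUo i, subset_rfl⟩, hUc, isEmptyElim⟩

theorem Topology.IsClosedEmbedding.covDimLE {Y : Type*} [TopologicalSpace Y] {f : Y → X}
    (hf : IsClosedEmbedding f) {n : ℕ} (h : CovDimLE X n) : CovDimLE Y n := by
  intro ι U hι hUo hUc
  choose O hOo hOU using fun i => hf.isInducing.isOpen_iff.mp (hUo i)
  -- extend the cover of `Y` to a cover of `X` by adding the complement of the range
  let O' : Option ι → Set X := fun j => j.elim (range f)ᶜ O
  have hO'o : ∀ j, IsOpen (O' j) := by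
    rintro (_ | i)
    exacts [hf.isClosed_range.isOpen_compl, hOo i]
  have hO'c : ⋃ j, O' j = univ := by
    refine eq_univ_of_forall fun x => ?_
    by_cases hx : x ∈ range f
    · obtain ⟨y, rfl⟩ := hx
      obtain ⟨i, hi⟩ := mem_iUnion.mp (hUc ▸ mem_univ y)
      exact mem_iUnion.mpr ⟨some i, by rw [← hOU i] at hi; exact hi⟩
    · exact mem_iUnion.mpr ⟨none, hx⟩
  obtain ⟨V, hV, hVc, hVord⟩ := h (Option ι) O' inferInstance hO'o hO'c
  refine ⟨fun i => f ⁻¹' V (some i),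
    fun i => ⟨(hV _).1.preimage hf.continuous, hOU i ▸ preimage_mono (hV (some i)).2⟩, ?_,
    fun y => ?_⟩
  · refine eq_univ_of_forall fun y => ?_
    obtain ⟨_ | i, hy⟩ := mem_iUnion.mp (hVc ▸ mem_univ (f y))
    · exact absurd (mem_range_self y) ((hV none).2 hy)
    · exact mem_iUnion.mpr ⟨i, hy⟩
  · have hsome : ∀ i ∈ {i | f y ∈ V (some i)}, some i ∈ {j | f y ∈ V j} := fun _ hi => hi
    exact ⟨(hVord _).1.preimage (Option.some_injective _).injOn,
      (ncard_le_ncard_of_injOn some hsome (Option.some_injective _).injOn (hVord _).1).trans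
        (hVord _).2⟩

theorem covDimLE_of_isClosed_subset {C S : Set X} (hC : IsClosed C) (hCS : C ⊆ S) {n : ℕ}
    (h : CovDimLE S n) : CovDimLE C n :=
  (IsClosedEmbedding.inclusion hCS (hC.preimage_val)).covDimLE h

theorem exists_shrinking_order_le_on_isClosed {F : Set X} (hF : IsClosed F) {n : ℕ}
    (hFn : CovDimLE F n) {ι : Type} [Finite ι] {U : ι → Set X} (hUo : ∀ i, IsOpen (U i))
    (hUc : ⋃ i, U i = univ) :
    ∃ V : ι → Set X, (∀ i, IsOpen (V i) ∧ V i ⊆ U i) ∧ ⋃ i, V i = univ ∧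
      ∀ x ∈ F, {i | x ∈ V i}.ncard ≤ n + 1 := by
  obtain ⟨W, hW, hWc, hWord⟩ := hFn ι (fun i => F ↓∩ U i) inferInstance
    (fun i => (hUo i).preimage_val) (by rw [← preimage_iUnion, hUc, preimage_univ])
  choose O hOo hOW using fun i => isOpen_induced_iff.mp (hW i).1
  -- inside `F` use the shrinking `W`, outside `F` keep `U`
  refine ⟨fun i => (O i ∩ U i) ∪ (U i \ F), fun i => ⟨((hOo i).inter (hUo i)).union
    ((hUo i).sdiff hF), union_subset inter_subset_right sdiff_subset⟩, ?_, fun x hx => ?_⟩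
  · refine eq_univ_of_forall fun x => ?_
    by_cases hx : x ∈ F
    · obtain ⟨i, hi⟩ := mem_iUnion.mp (hWc ▸ mem_univ (⟨x, hx⟩ : F))
      have hxO : (⟨x, hx⟩ : F) ∈ F ↓∩ O i := (hOW i).symm ▸ hi
      exact mem_iUnion.mpr ⟨i, Or.inl ⟨hxO, (hW i).2 hi⟩⟩
    · obtain ⟨i, hi⟩ := mem_iUnion.mp (hUc ▸ mem_univ x)
      exact mem_iUnion.mpr ⟨i, Or.inr ⟨hi, hx⟩⟩
  · have hsub : {i | x ∈ (O i ∩ U i) ∪ (U i \ F)} ⊆ {i | (⟨x, hx⟩ : F) ∈ W i} := by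
      rintro i (⟨hO, -⟩ | ⟨-, hxF⟩)
      exacts [show (⟨x, hx⟩ : F) ∈ W i from hOW i ▸ hO, absurd hx hxF]
    exact (ncard_le_ncard hsub (hWord _).1).trans (hWord _).2

theorem exists_closure_shrinking_order_le_on_isClosed [NormalSpace X] {F : Set X}
    (hF : IsClosed F) {n : ℕ} (hFn : CovDimLE F n) {ι : Type} [Finite ι] {U : ι → Set X}
    (hUo : ∀ i, IsOpen (U i)) (hUc : ⋃ i, U i = univ) :
    ∃ V : ι → Set X, (∀ i, IsOpen (V i)) ∧ (∀ i, closure (V i) ⊆ U i) ∧ ⋃ i, V i = univ ∧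
      ∀ x ∈ F, {i | x ∈ V i}.ncard ≤ n + 1 := by
  obtain ⟨W, hW, hWc, hWord⟩ := exists_shrinking_order_le_on_isClosed hF hFn hUo hUc
  obtain ⟨V, hVc, hVo, hVW⟩ :=
    exists_iUnion_eq_closure_subset (fun i => (hW i).1) (fun _ => toFinite _) hWc
  refine ⟨V, hVo, fun i => (hVW i).trans (hW i).2, hVc, fun x hx => ?_⟩
  exact (ncard_le_ncard (fun i hi => hVW i (subset_closure hi)) (toFinite _)).trans (hWord x hx)

end CoveringDimension

def nerve {ι α : Type*} (A : ι → Set α) : Set (Set ι) :=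
  {s | ∃ x, ∀ i ∈ s, x ∈ A i}

theorem nerve_mono {ι α : Type*} {A B : ι → Set α} (h : ∀ i, A i ⊆ B i) : nerve A ⊆ nerve B :=
  fun _ ⟨x, hx⟩ => ⟨x, fun i hi => h i (hx i hi)⟩

section Swelling

variable {X : Type*} [TopologicalSpace X] [NormalSpace X]

theorem exists_isOpen_nerve_update_closure_subset {ι : Type*} [Finite ι] [DecidableEq ι]
    {A : ι → Set X} (hA : ∀ i, IsClosed (A i)) (j : ι) {U : Set X} (hU : IsOpen U) (hAU : A j ⊆ U) :
    ∃ G, IsOpen G ∧ A j ⊆ G ∧ closure G ⊆ U ∧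
      nerve (Function.update A j (closure G)) ⊆ nerve A := by
  -- a point `x ∉ Z` has a companion `y ∈ A j` lying in every `A i` that contains `x`,
  -- so keeping `closure G` off `Z` preserves the nerve
  set Z := ⋂ y ∈ A j, ⋃ i ∈ {i | y ∉ A i}, A i
  have hZ : IsClosed Z :=
    isClosed_biInter fun y _ => (toFinite _).isClosed_biUnion fun i _ => hA i
  have hAZ : A j ⊆ U ∩ Zᶜ := fun x hx => ⟨hAU hx, fun hxZ => by
    obtain ⟨i, hxi, hxi'⟩ := mem_iUnion₂.mp (mem_iInter₂.mp hxZ x hx)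
    exact hxi hxi'⟩
  obtain ⟨G, hGo, hAG, hGU⟩ := normal_exists_closure_subset (hA j) (hU.inter hZ.isOpen_compl) hAZ
  refine ⟨G, hGo, hAG, hGU.trans inter_subset_left, ?_⟩
  rintro s ⟨x, hx⟩
  by_cases hxG : x ∈ closure G
  · have hxZ : x ∉ Z := (hGU hxG).2
    simp only [Z, mem_iInter₂, mem_iUnion₂, not_forall, not_exists] at hxZ
    obtain ⟨y, hyA, hy⟩ := hxZ
    refine ⟨y, fun i hi => ?_⟩
    rcases eq_or_ne i j with rfl | hij
    · exact hyA
    · by_contra hyi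
      exact hy i hyi (by simpa [hij] using hx i hi)
  · refine ⟨x, fun i hi => ?_⟩
    have hij : i ≠ j := by
      rintro rfl
      exact hxG (by simpa using hx i hi)
    simpa [hij] using hx i hi

theorem exists_isOpen_swelling {ι : Type*} [Finite ι] {A U : ι → Set X}
    (hA : ∀ i, IsClosed (A i)) (hU : ∀ i, IsOpen (U i)) (hAU : ∀ i, A i ⊆ U i) :
    ∃ V : ι → Set X, (∀ i, IsOpen (V i) ∧ A i ⊆ V i ∧ V i ⊆ U i) ∧ nerve V ⊆ nerve A := by
  classical
  have : Fintype ι := Fintype.ofFinite ι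
  -- swell the members indexed by `t` one at a time
  suffices H : ∀ t : Finset ι, ∀ A : ι → Set X, (∀ i, IsClosed (A i)) → (∀ i, A i ⊆ U i) →
      ∃ V : ι → Set X, (∀ i, A i ⊆ V i ∧ V i ⊆ U i) ∧ (∀ i ∈ t, IsOpen (V i)) ∧
        nerve V ⊆ nerve A by
    obtain ⟨V, hAV, hVo, hV⟩ := H Finset.univ A hA hAU
    exact ⟨V, fun i => ⟨hVo i (Finset.mem_univ i), hAV i⟩, hV⟩
  intro t
  induction t using Finset.induction_on with
  | empty => exact fun A _ hAU => ⟨A, fun i => ⟨subset_rfl, hAU i⟩, by simp, subset_rfl⟩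
  | insert j t _ ih =>
    intro A hA hAU
    obtain ⟨G, hGo, hAG, hGU, hnerve⟩ :=
      exists_isOpen_nerve_update_closure_subset hA j (hU j) (hAU j)
    obtain ⟨V, hAV, hVo, hV⟩ := ih (Function.update A j (closure G))
      ((Function.forall_update_iff _ fun _ s => IsClosed s).mpr
        ⟨isClosed_closure, fun i _ => hA i⟩)
      ((Function.forall_update_iff _ fun i s => s ⊆ U i).mpr ⟨hGU, fun i _ => hAU i⟩)
    have hGV : G ⊆ V j := subset_closure.trans (by simpa using (hAV j).1)
    refine ⟨Function.update V j G, fun i => ?_, fun i hi => ?_, ?_⟩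
    · rcases eq_or_ne i j with rfl | hij
      · simpa using ⟨hAG, hGV.trans (hAV i).2⟩
      · simpa [hij] using hAV i
    · rcases eq_or_ne i j with rfl | hij
      · simpa using hGo
      · simpa [hij] using hVo i ((Finset.mem_insert.mp hi).resolve_left hij)
    · refine (nerve_mono fun i => ?_).trans (hV.trans hnerve)
      rcases eq_or_ne i j with rfl | hij
      · simpa using hGV
      · simp [hij]

end Swelling

section SumTheorem

variable {X : Type*} [TopologicalSpace X] [NormalSpace X]

theorem exists_seq_closure_shrinking {F : ℕ → Set X} {n : ℕ} (hFc : ∀ k, IsClosed (F k))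
    (hFn : ∀ k, CovDimLE (F k) n) {ι : Type} [Finite ι] {U : ι → Set X}
    (hUo : ∀ i, IsOpen (U i)) (hUc : ⋃ i, U i = univ) :
    ∃ W : ℕ → ι → Set X, W 0 = U ∧ (∀ k, ⋃ i, W k i = univ) ∧
      (∀ k i, closure (W (k + 1) i) ⊆ W k i) ∧
      ∀ k, ∀ x ∈ F k, {i | x ∈ W (k + 1) i}.ncard ≤ n + 1 := by
  choose! step hstep_o hstep_cl hstep_c hstep_ord using
    fun k (W : ι → Set X) (hW : (∀ i, IsOpen (W i)) ∧ ⋃ i, W i = univ) =>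
      exists_closure_shrinking_order_le_on_isClosed (hFc k) (hFn k) hW.1 hW.2
  let W : ℕ → ι → Set X := fun k => Nat.rec (motive := fun _ => ι → Set X) U step k
  have hW : ∀ k, (∀ i, IsOpen (W k i)) ∧ ⋃ i, W k i = univ := by
    intro k
    induction k with
    | zero => exact ⟨hUo, hUc⟩
    | succ k ih => exact ⟨hstep_o k (W k) ih, hstep_c k (W k) ih⟩
  exact ⟨W, rfl, fun k => (hW k).2, fun k => hstep_cl k (W k) (hW k),
    fun k => hstep_ord k (W k) (hW k)⟩

theorem covDimLE_of_iUnion_isClosed {F : ℕ → Set X} {n : ℕ} (hFc : ∀ k, IsClosed (F k))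
    (hFu : ⋃ k, F k = univ) (hFn : ∀ k, CovDimLE (F k) n) : CovDimLE X n := by
  intro ι U hι hUo hUc
  obtain ⟨W, hW0, hWc, hWcl, hWord⟩ := exists_seq_closure_shrinking hFc hFn hUo hUc
  have hanti : ∀ i, Antitone fun k => closure (W k i) :=
    fun i => antitone_nat_of_succ_le fun k => (hWcl k i).trans subset_closure
  -- the limit of the shrinkings is a closed cover of order at most `n + 1`
  set A : ι → Set X := fun i => ⋂ k, closure (W k i)
  have hAc : ∀ i, IsClosed (A i) := fun i => isClosed_iInter fun _ => isClosed_closure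
  have hAU : ∀ i, A i ⊆ U i := fun i => hW0 ▸ (iInter_subset _ 1).trans (hWcl 0 i)
  have hAcov : ∀ x, ∃ i, x ∈ A i := by
    intro x
    by_contra! hx
    simp only [A, mem_iInter, not_forall] at hx
    choose k hk using hx
    obtain ⟨N, hN⟩ := (finite_range k).bddAbove
    obtain ⟨i, hi⟩ := mem_iUnion.mp (hWc N ▸ mem_univ x)
    exact hk i (hanti i (hN (mem_range_self i)) (subset_closure hi))
  have hAord : ∀ x, {i | x ∈ A i}.ncard ≤ n + 1 := by
    intro x
    obtain ⟨k, hk⟩ := mem_iUnion.mp (hFu ▸ mem_univ x)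
    refine (ncard_le_ncard (fun i hi => ?_) (toFinite _)).trans (hWord k x hk)
    exact hWcl (k + 1) i (mem_iInter.mp hi (k + 2))
  obtain ⟨V, hV, hVA⟩ := exists_isOpen_swelling hAc hUo hAU
  refine ⟨V, fun i => ⟨(hV i).1, (hV i).2.2⟩, ?_, fun x => ⟨toFinite _, ?_⟩⟩
  · refine eq_univ_of_forall fun x => ?_
    obtain ⟨i, hi⟩ := hAcov x
    exact mem_iUnion.mpr ⟨i, (hV i).2.1 hi⟩
  · obtain ⟨y, hy⟩ := hVA ⟨x, fun _ hi => hi⟩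
    exact (ncard_le_ncard hy (toFinite _)).trans (hAord y)

end SumTheorem

theorem covDimLE_of_iUnion_isClosed_subset {X : Type*} [TopologicalSpace X] [T5Space X]
    {S F : Set X} {D : ℕ → Set X} (hD : ∀ j, IsClosed (D j)) (hDS : ⋃ j, D j = S)
    (hSF : S ⊆ F) {n : ℕ} (hF : CovDimLE F n) : CovDimLE S n := by
  refine covDimLE_of_iUnion_isClosed (F := fun j => S ↓∩ D j) (fun j => (hD j).preimage_val)
    (by rw [← preimage_iUnion, hDS, Subtype.coe_preimage_self]) fun j => ?_
  have hDF : D j ⊆ F := (subset_iUnion D j).trans (hDS ▸ hSF)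
  have hval : IsClosedEmbedding fun p : S ↓∩ D j => p.1.1 := by
    refine ⟨IsEmbedding.subtypeVal.comp IsEmbedding.subtypeVal, ?_⟩
    convert hD j
    ext x
    simpa using fun hx => hDS ▸ subset_iUnion D j hx
  exact IsClosedEmbedding.covDimLE (f := fun p : S ↓∩ D j => (⟨p.1.1, hDF p.2⟩ : F))
    (.of_comp IsEmbedding.subtypeVal hval) hF

theorem IsOpen.exists_iUnion_isClosed_eq_inter {X : Type*} [TopologicalSpace X]
    [PseudoMetrizableSpace X] {G Y : Set X} (hG : IsOpen G) (hY : IsClosed Y) :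
    ∃ D : ℕ → Set X, (∀ j, IsClosed (D j)) ∧ ⋃ j, D j = G ∩ Y := by
  let := pseudoMetrizableSpacePseudoMetric X
  obtain ⟨E, hE, -, hEG, -⟩ := hG.exists_iUnion_isClosed
  exact ⟨fun j => E j ∩ Y, fun j => (hE j).inter hY, by rw [← iUnion_inter, hEG]⟩

theorem Ordinal.countable_Iio_iff_lt_ord_aleph_one {α : Ordinal} :
    (Iio α).Countable ↔ α < (Cardinal.aleph 1).ord := by
  rw [← Cardinal.le_aleph0_iff_set_countable, Cardinal.mk_Iio_ordinal, Cardinal.lift_le_aleph0,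
    Cardinal.lt_ord, Cardinal.lt_aleph_one_iff]

theorem exists_lt_ord_aleph_one_eq_empty {X : Type*} [TopologicalSpace X]
    [SecondCountableTopology X] {s : Ordinal → Set X} (hs : Antitone s) (hsc : ∀ α, IsClosed (s α))
    (hsucc : ∀ α, (s α).Nonempty → (s α \ s (Order.succ α)).Nonempty) :
    ∃ α < (Cardinal.aleph 1).ord, s α = ∅ := by
  by_contra! hne
  -- a basic open set meeting `s α` but missing `s (succ α)` determines `α`
  have hbasis : ∀ α : Iio (Cardinal.aleph 1).ord, ∃ b ∈ countableBasis X,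
      (b ∩ s α).Nonempty ∧ Disjoint b (s (Order.succ α)) := by
    rintro ⟨α, hα⟩
    obtain ⟨x, hxα, hxs⟩ := hsucc α (hne α hα)
    obtain ⟨b, hb, hxb, hbs⟩ := (isBasis_countableBasis X).exists_subset_of_mem_open
      (mem_compl hxs) (hsc _).isOpen_compl
    exact ⟨b, hb, ⟨x, hxb, hxα⟩, subset_compl_iff_disjoint_right.mp hbs⟩
  choose b hb hbs hbdisj using hbasis
  have hinj : Function.Injective fun α => (⟨b α, hb α⟩ : countableBasis X) := by
    refine Function.Injective.of_lt_imp_ne fun α β hαβ hb_eq => ?_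
    obtain ⟨x, hxb, hxβ⟩ := hbs β
    have hxb' : x ∈ b α := by rwa [show b α = b β from congrArg Subtype.val hb_eq]
    exact (hbdisj α).notMem_of_mem_left hxb' (hs (Order.succ_le_of_lt hαβ) hxβ)
  have : Countable (countableBasis X) :=
    (countable_countableBasis X).to_subtype
  exact (Ordinal.countable_Iio_iff_lt_ord_aleph_one.mp (countable_coe_iff.mp hinj.countable)).false

section FdDerivative

variable {X : Type*} [TopologicalSpace X]

theorem fdKernel_eq (Y : Set X) :
    fdKernel Y = (⋃₀ {V : Set X | IsOpen V ∧ TopFiniteDim ↥(V ∩ Y)}) ∩ Y := by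
  apply Subset.antisymm
  · rintro x ⟨_, ⟨-, ⟨V, hV, rfl⟩, hfd⟩, hx⟩
    exact ⟨⟨V, ⟨hV, hfd⟩, hx.1⟩, hx.2⟩
  · rintro x ⟨⟨V, ⟨hV, hfd⟩, hxV⟩, hxY⟩
    exact ⟨V ∩ Y, ⟨inter_subset_right, ⟨V, hV, rfl⟩, hfd⟩, hxV, hxY⟩

theorem fdKernel_subset (Y : Set X) : fdKernel Y ⊆ Y :=
  (fdKernel_eq Y).trans_subset inter_subset_right

theorem fdDeriv_zero : fdDeriv X 0 = univ :=
  Ordinal.limitRecOn_zero _ _ _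

theorem fdDeriv_succ (α : Ordinal) :
    fdDeriv X (Order.succ α) = fdDeriv X α \ fdKernel (fdDeriv X α) := by
  rw [Order.succ_eq_add_one]
  exact Ordinal.limitRecOn_add_one _ _ _ _

theorem fdDeriv_limit {α : Ordinal} (hα : Order.IsSuccLimit α) :
    fdDeriv X α = ⋂ β, ⋂ _ : β < α, fdDeriv X β :=
  Ordinal.limitRecOn_limit _ _ _ _ hα

theorem fdDeriv_diff_fdDeriv_succ (α : Ordinal) :
    fdDeriv X α \ fdDeriv X (Order.succ α) = fdKernel (fdDeriv X α) := by
  rw [fdDeriv_succ, sdiff_sdiff_cancel_left (fdKernel_subset _)]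

theorem fdDeriv_antitone : Antitone (fdDeriv X) := by
  intro β α hβα
  induction α using Ordinal.limitRecOn with
  | zero => rw [nonpos_iff_eq_zero.mp hβα]
  | add_one α ih =>
    rw [← Order.succ_eq_add_one] at hβα ⊢
    rcases Order.le_succ_iff_eq_or_le.mp hβα with rfl | hβα
    · exact subset_rfl
    · exact (fdDeriv_succ (X := X) α ▸ sdiff_subset).trans (ih hβα)
  | limit α hα _ =>
    rcases hβα.eq_or_lt with rfl | hβα
    · exact subset_rfl
    · exact (fdDeriv_limit hα).trans_subset (iInter₂_subset β hβα)

theorem isClosed_fdDeriv (α : Ordinal) : IsClosed (fdDeriv X α) := by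
  induction α using Ordinal.limitRecOn with
  | zero => exact fdDeriv_zero (X := X) ▸ isClosed_univ
  | add_one α ih =>
    rw [← Order.succ_eq_add_one, fdDeriv_succ, fdKernel_eq, sdiff_inter_self_eq_sdiff]
    exact ih.sdiff (isOpen_sUnion fun V hV => hV.1)
  | limit α hα ih =>
    rw [fdDeriv_limit hα]
    exact isClosed_iInter fun β => isClosed_iInter fun hβ => ih β hβ

theorem exists_lt_mem_fdKernel_of_notMem_fdDeriv {α : Ordinal} {x : X} (hx : x ∉ fdDeriv X α) :
    ∃ γ < α, x ∈ fdKernel (fdDeriv X γ) := by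
  induction α using Ordinal.limitRecOn with
  | zero => exact absurd (fdDeriv_zero (X := X) ▸ mem_univ x) hx
  | add_one α ih =>
    rw [← Order.succ_eq_add_one] at hx ⊢
    by_cases hxα : x ∈ fdDeriv X α
    · exact ⟨α, Order.lt_succ α, fdDeriv_diff_fdDeriv_succ (X := X) α ▸ ⟨hxα, hx⟩⟩
    · obtain ⟨γ, hγ, hxγ⟩ := ih hxα
      exact ⟨γ, hγ.trans (Order.lt_succ α), hxγ⟩
  | limit α hα ih =>
    rw [fdDeriv_limit (X := X) hα] at hx
    simp only [mem_iInter, not_forall] at hx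
    obtain ⟨β, hβ, hxβ⟩ := hx
    obtain ⟨γ, hγ, hxγ⟩ := ih β hβ hxβ
    exact ⟨γ, hγ.trans hβ, hxγ⟩

end FdDerivative

section CountableHeight

variable {X : Type*} [TopologicalSpace X]

theorem IsCompact.fdKernel_nonempty [MetrizableSpace X] {F : ℕ → Set X}
    (hF : ∀ n, IsClosed (F n) ∧ TopFiniteDim ↥(F n)) (hFu : ⋃ n, F n = univ) {Y : Set X}
    (hY : IsCompact Y) (hne : Y.Nonempty) : (fdKernel Y).Nonempty := by
  have : CompactSpace Y := isCompact_iff_compactSpace.mp hY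
  have : Nonempty Y := hne.to_subtype
  obtain ⟨m, ⟨x, hxY⟩, hx⟩ := nonempty_interior_of_iUnion_of_closed (f := fun m => Y ↓∩ F m)
    (fun m => (hF m).1.preimage_val) (by rw [← preimage_iUnion, hFu, preimage_univ])
  obtain ⟨G, hG, hGY⟩ := isOpen_induced_iff.mp (isOpen_interior (s := Y ↓∩ F m))
  have hGF : G ∩ Y ⊆ F m := fun z ⟨hzG, hzY⟩ =>
    interior_subset (s := Y ↓∩ F m) (hGY ▸ hzG : (⟨z, hzY⟩ : Y) ∈ _)
  obtain ⟨k, hk⟩ := (hF m).2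
  obtain ⟨D, hD, hDG⟩ := hG.exists_iUnion_isClosed_eq_inter hY.isClosed
  have hxG : (⟨x, hxY⟩ : Y) ∈ Y ↓∩ G := hGY ▸ hx
  rw [fdKernel_eq]
  exact ⟨x, ⟨G, ⟨hG, k, covDimLE_of_iUnion_isClosed_subset hD hDG hGF hk⟩, hxG⟩, hxY⟩

theorem exists_countable_closed_topFiniteDim_cover_fdKernel
    [PseudoMetrizableSpace X] [SecondCountableTopology X] {Y : Set X}
    (hY : IsClosed Y) :
    ∃ 𝒞 : Set (Set X), 𝒞.Countable ∧ (∀ C ∈ 𝒞, IsClosed C ∧ TopFiniteDim ↥C) ∧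
      fdKernel Y ⊆ ⋃₀ 𝒞 := by
  obtain ⟨T, hTc, hT, hTU⟩ := isOpen_sUnion_countable
    {V : Set X | IsOpen V ∧ TopFiniteDim ↥(V ∩ Y)} fun V hV => hV.1
  have hslices : ∀ V ∈ T, ∃ D : ℕ → Set X, (∀ j, IsClosed (D j) ∧ TopFiniteDim ↥(D j)) ∧
      ⋃ j, D j = V ∩ Y := by
    intro V hV
    obtain ⟨hVo, k, hk⟩ := hT hV
    obtain ⟨D, hD, hDV⟩ := hVo.exists_iUnion_isClosed_eq_inter hY
    exact ⟨D, fun j => ⟨hD j, k, covDimLE_of_isClosed_subset (hD j) (hDV ▸ subset_iUnion D j) hk⟩,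
      hDV⟩
  choose! D hD hDV using hslices
  refine ⟨⋃ V ∈ T, range (D V), hTc.biUnion fun V _ => countable_range _, ?_, ?_⟩
  · simp only [mem_iUnion, mem_range]
    rintro _ ⟨V, hV, j, rfl⟩
    exact hD V hV j
  · rw [fdKernel_eq, ← hTU]
    rintro x ⟨⟨V, hV, hxV⟩, hxY⟩
    obtain ⟨j, hj⟩ := mem_iUnion.mp ((hDV V hV).symm ▸ ⟨hxV, hxY⟩ : x ∈ ⋃ j, D V j)
    exact mem_sUnion_of_mem hj (mem_biUnion hV (mem_range_self j))

theorem Set.Countable.exists_seq_closed_topFiniteDim {𝒞 : Set (Set X)} (h𝒞 : 𝒞.Countable)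
    (hC : ∀ C ∈ 𝒞, IsClosed C ∧ TopFiniteDim ↥C) :
    ∃ F : ℕ → Set X, (∀ n, IsClosed (F n) ∧ TopFiniteDim ↥(F n)) ∧ ⋃ n, F n = ⋃₀ 𝒞 := by
  obtain ⟨F, hF⟩ := (h𝒞.insert ∅).exists_eq_range (insert_nonempty _ _)
  refine ⟨F, fun n => ?_, by rw [← sUnion_range, ← hF, sUnion_insert, empty_union]⟩
  rcases (hF ▸ mem_range_self n : F n ∈ insert ∅ 𝒞) with h | h
  · rw [h]
    exact ⟨isClosed_empty, 0, covDimLE_of_isEmpty 0⟩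
  · exact hC _ h

end CountableHeight

/-- A compact metrizable space is strongly countable-dimensional (a countable
union of closed finite-dimensional subspaces) iff its fd-height is countable. -/
theorem strongly_countable_dimensional_iff_fd_height_countable
    (K : Type*) [TopologicalSpace K] [CompactSpace K]
    [TopologicalSpace.MetrizableSpace K] :
    (∃ F : ℕ → Set K, (∀ n, IsClosed (F n) ∧ TopFiniteDim ↥(F n)) ∧
        (⋃ n, F n) = univ) ↔
      ∃ α : Ordinal, α < (Cardinal.aleph 1).ord ∧ fdDeriv K α = ∅ := by
  constructor
  · rintro ⟨F, hF, hFu⟩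
    exact exists_lt_ord_aleph_one_eq_empty fdDeriv_antitone isClosed_fdDeriv fun α hα =>
      fdDeriv_diff_fdDeriv_succ (X := K) α ▸
        (isClosed_fdDeriv α).isCompact.fdKernel_nonempty hF hFu hα
  · rintro ⟨α, hα, hαe⟩
    choose 𝒞 h𝒞c h𝒞 hker using fun γ : Ordinal =>
      exists_countable_closed_topFiniteDim_cover_fdKernel (isClosed_fdDeriv (X := K) γ)
    obtain ⟨F, hF, hFu⟩ := ((Ordinal.countable_Iio_iff_lt_ord_aleph_one.mpr hα).biUnion
      fun γ _ => h𝒞c γ).exists_seq_closed_topFiniteDim (by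
        simp only [mem_iUnion₂]
        rintro C ⟨γ, -, hC⟩
        exact h𝒞 γ C hC)
    refine ⟨F, hF, eq_univ_of_forall fun x => ?_⟩
    obtain ⟨γ, hγ, hx⟩ := exists_lt_mem_fdKernel_of_notMem_fdDeriv (hαe.symm ▸ notMem_empty x)
    obtain ⟨C, hC, hxC⟩ := hker γ hx
    exact hFu ▸ mem_sUnion_of_mem hxC (mem_biUnion hγ hC)
end

section
/- Let X be an infinite Polish zero-dimensional space that is not σ-compact. Then C_p(X) is uniformly homeomorphic to C_p(ω^ω), the function space of the irrationals. In particular, C_p(X) is uniformly homeomorphic to C_p(X) × C_p(X). -/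
/-!
A zero-dimensional Polish space `X` is homeomorphic to a closed subset of the Baire space `ℕ^ℕ`
(code its points along a Lusin scheme of clopen partitions of vanishing mesh), and if `X` is not
σ-compact it contains, by Hurewicz's theorem, a closed copy of `ℕ^ℕ`. Closed subsets of `ℕ^ℕ` are
retracts of it, so each of `C_p(X)` and `C_p(ℕ^ℕ)` is a uniform direct factor of the other. As
`C_p(ℕ^ℕ) ≅ C_p(ℕ × ℕ^ℕ) ≅ C_p(ℕ^ℕ)^ℕ`, Pełczyński's decomposition method gives
`C_p(X) ≅ C_p(ℕ^ℕ)`, and then `C_p(X) ≅ C_p(ℕ^ℕ) × C_p(ℕ^ℕ) ≅ C_p(X) × C_p(X)`.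
-/

open Set Function Filter Topology TopologicalSpace PiNat CantorScheme

namespace UniformEquiv

def arrowProdEquivProdArrow (ι α β : Type*) [UniformSpace α] [UniformSpace β] :
    (ι → α × β) ≃ᵤ (ι → α) × (ι → β) where
  toEquiv := Equiv.arrowProdEquivProdArrow ι (fun _ => α) (fun _ => β)
  uniformContinuous_toFun :=
    (uniformContinuous_pi.2 fun i =>
        uniformContinuous_fst.comp (Pi.uniformContinuous_proj _ i)).prodMk
      (uniformContinuous_pi.2 fun i => uniformContinuous_snd.comp (Pi.uniformContinuous_proj _ i))
  uniformContinuous_invFun := uniformContinuous_pi.2 fun i =>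
    ((Pi.uniformContinuous_proj _ i).comp uniformContinuous_fst).prodMk
      ((Pi.uniformContinuous_proj _ i).comp uniformContinuous_snd)

def sumArrowEquivProdArrow (ι ι' α : Type*) [UniformSpace α] :
    (ι ⊕ ι' → α) ≃ᵤ (ι → α) × (ι' → α) where
  toEquiv := Equiv.sumArrowEquivProdArrow ι ι' α
  uniformContinuous_toFun :=
    (uniformContinuous_pi.2 fun i => Pi.uniformContinuous_proj _ (Sum.inl i)).prodMk
      (uniformContinuous_pi.2 fun i => Pi.uniformContinuous_proj _ (Sum.inr i))
  uniformContinuous_invFun := uniformContinuous_pi.2 fun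
    | .inl i => (Pi.uniformContinuous_proj _ i).comp uniformContinuous_fst
    | .inr i => (Pi.uniformContinuous_proj _ i).comp uniformContinuous_snd

def piNatEquivProd (α : Type*) [UniformSpace α] : (ℕ → α) ≃ᵤ α × (ℕ → α) where
  toFun x := (x 0, fun n => x (n + 1))
  invFun p n := Nat.casesOn n p.1 p.2
  left_inv x := funext fun n => by cases n <;> rfl
  right_inv _ := rfl
  uniformContinuous_toFun :=
    (Pi.uniformContinuous_proj _ 0).prodMk
      (uniformContinuous_pi.2 fun n => Pi.uniformContinuous_proj _ (n + 1))
  uniformContinuous_invFun := uniformContinuous_pi.2 fun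
    | 0 => uniformContinuous_fst
    | n + 1 => (Pi.uniformContinuous_proj _ n).comp uniformContinuous_snd

def piNatEquivProdSelf (α : Type*) [UniformSpace α] : (ℕ → α) ≃ᵤ (ℕ → α) × (ℕ → α) :=
  (piCongrLeft (β := fun _ => α) Equiv.natSumNatEquivNat).symm.trans
    (sumArrowEquivProdArrow ℕ ℕ α)

variable {A B E F : Type*} [UniformSpace A] [UniformSpace B] [UniformSpace E] [UniformSpace F]

def prodSelfOfPiNat (e : B ≃ᵤ (ℕ → B)) : B ≃ᵤ B × B :=
  e.trans ((piNatEquivProdSelf B).trans (e.symm.prodCongr e.symm))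

/-- `B ≅ (A × F)^ℕ ≅ A^ℕ × F^ℕ ≅ A × A^ℕ × F^ℕ ≅ A × (A × F)^ℕ ≅ A × B`. -/
def prodAbsorbOfPiNat (e : B ≃ᵤ (ℕ → B)) (e' : B ≃ᵤ A × F) : B ≃ᵤ A × B :=
  let eB : B ≃ᵤ (ℕ → A × F) := e.trans (piCongrRight fun _ => e')
  eB.trans <| (arrowProdEquivProdArrow ℕ A F).trans <|
    ((piNatEquivProd A).prodCongr (UniformEquiv.refl _)).trans <|
      (prodAssoc A (ℕ → A) (ℕ → F)).trans <|
        (UniformEquiv.refl A).prodCongr ((arrowProdEquivProdArrow ℕ A F).symm.trans eB.symm)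

/-- Pełczyński's decomposition method: `A ≅ B × E ≅ B × B × E ≅ B × A ≅ B`. -/
def ofPelczynski (e₁ : A ≃ᵤ B × E) (e₂ : B ≃ᵤ A × F) (e₃ : B ≃ᵤ (ℕ → B)) : A ≃ᵤ B :=
  e₁.trans <| ((prodSelfOfPiNat e₃).prodCongr (UniformEquiv.refl E)).trans <|
    (prodAssoc B B E).trans <| ((UniformEquiv.refl B).prodCongr e₁.symm).trans <|
      (prodComm B A).trans (prodAbsorbOfPiNat e₃ e₂).symm

end UniformEquiv

namespace Cp

variable {Z W : Type*} [TopologicalSpace Z] [TopologicalSpace W]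

theorem uniformContinuous_iff {α : Type*} [UniformSpace α] {F : α → Cp Z} :
    UniformContinuous F ↔ ∀ z, UniformContinuous fun a => (F a).1 z :=
  (isUniformEmbedding_subtype_val.isUniformInducing.uniformContinuous_iff (f := F)).trans
    uniformContinuous_pi

theorem uniformContinuous_eval (z : Z) : UniformContinuous fun f : Cp Z => f.1 z :=
  uniformContinuous_iff.1 uniformContinuous_id z

def congr (e : Z ≃ₜ W) : Cp Z ≃ᵤ Cp W where
  toFun f := ⟨f.1 ∘ e.symm, f.2.comp e.continuous_symm⟩
  invFun f := ⟨f.1 ∘ e, f.2.comp e.continuous⟩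
  left_inv f := Subtype.ext <| funext fun z => by simp
  right_inv f := Subtype.ext <| funext fun w => by simp
  uniformContinuous_toFun := uniformContinuous_iff.2 fun w => uniformContinuous_eval (e.symm w)
  uniformContinuous_invFun := uniformContinuous_iff.2 fun z => uniformContinuous_eval (e z)

def prodEquivPi (ι : Type*) [TopologicalSpace ι] [DiscreteTopology ι] :
    Cp (ι × Z) ≃ᵤ (ι → Cp Z) where
  toFun f i := ⟨fun z => f.1 (i, z), f.2.comp (Continuous.prodMk_right i)⟩
  invFun F := ⟨fun p => (F p.1).1 p.2, continuous_prod_of_discrete_left.2 fun i => (F i).2⟩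
  left_inv _ := rfl
  right_inv _ := rfl
  uniformContinuous_toFun := uniformContinuous_pi.2 fun i =>
    uniformContinuous_iff.2 fun z => uniformContinuous_eval (i, z)
  uniformContinuous_invFun := uniformContinuous_iff.2 fun p =>
    (uniformContinuous_eval p.2).comp (Pi.uniformContinuous_proj _ p.1)

def natNatEquivPi : Cp (ℕ → ℕ) ≃ᵤ (ℕ → Cp (ℕ → ℕ)) :=
  (congr (UniformEquiv.piNatEquivProd ℕ).toHomeomorph).trans (prodEquivPi ℕ)

def equivProdOfLeftInverse {i : W → Z} {r : Z → W} (hi : Continuous i) (hr : Continuous r)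
    (hri : LeftInverse r i) :
    Cp Z ≃ᵤ Cp W × {f : Z → ℝ // Continuous f ∧ ∀ w, f (i w) = 0} where
  toFun f := (⟨f.1 ∘ i, f.2.comp hi⟩,
    ⟨fun z => f.1 z - f.1 (i (r z)), f.2.sub (f.2.comp (hi.comp hr)), fun w => by simp [hri w]⟩)
  invFun p := ⟨fun z => p.1.1 (r z) + p.2.1 z, (p.1.2.comp hr).add p.2.2.1⟩
  left_inv f := Subtype.ext <| funext fun z => by simp
  right_inv := fun ⟨g, h, hh, hh0⟩ => by
    refine Prod.ext (Subtype.ext <| funext fun w => ?_) (Subtype.ext <| funext fun z => ?_)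
    · simp [hri w, hh0 w]
    · simp [hri (r z), hh0]
  uniformContinuous_toFun :=
    (uniformContinuous_iff.2 fun w => uniformContinuous_eval (i w)).prodMk <|
      (uniformContinuous_pi.2 fun z =>
        (uniformContinuous_eval z).sub (uniformContinuous_eval (i (r z)))).subtype_mk _
  uniformContinuous_invFun := uniformContinuous_iff.2 fun z =>
    ((uniformContinuous_eval (r z)).comp uniformContinuous_fst).add
      (((Pi.uniformContinuous_proj _ z).comp uniformContinuous_subtype_val).comp
        uniformContinuous_snd)

end Cp

namespace CantorScheme

variable {β α : Type*} {A : List β → Set α}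

theorem eq_of_mem_of_mem (hanti : CantorScheme.Antitone A) (hdisj : CantorScheme.Disjoint A)
    {a : α} : ∀ {l l' : List β}, a ∈ A l → a ∈ A l' → l.length = l'.length → l = l'
  | [], [], _, _, _ => rfl
  | b :: l, b' :: l', h, h', hlen => by
    obtain rfl : l = l' :=
      eq_of_mem_of_mem hanti hdisj (hanti l b h) (hanti l' b' h') (by simpa using hlen)
    by_cases hb : b = b'
    · rw [hb]
    · exact absurd rfl ((hdisj l hb).ne_of_mem h h')

theorem inducedMap_mem_iff (hanti : CantorScheme.Antitone A) (hdisj : CantorScheme.Disjoint A)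
    (x : (inducedMap A).1) (l : List β) : (inducedMap A).2 x ∈ A l ↔ res x.1 l.length = l :=
  ⟨fun h => eq_of_mem_of_mem hanti hdisj (map_mem x _) h (res_length _ _),
    fun h => h ▸ map_mem x _⟩

theorem exists_branch (hanti : CantorScheme.Antitone A) (hdisj : CantorScheme.Disjoint A)
    {a : α} (ha : ∀ n, ∃ l : List β, l.length = n ∧ a ∈ A l) :
    ∃ x : ℕ → β, ∀ n, a ∈ A (res x n) := by
  choose l hlen hal using ha
  have hstep : ∀ n, ∃ b, l (n + 1) = b :: l n := fun n => by
    obtain ⟨b, t, ht⟩ := List.exists_cons_of_length_eq_add_one (hlen (n + 1))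
    have htl : t.length = (l n).length := by
      have := hlen (n + 1); rw [ht, List.length_cons] at this; rw [hlen n]; omega
    exact ⟨b, ht.trans (congrArg _ (eq_of_mem_of_mem hanti hdisj
      (hanti t b (ht ▸ hal (n + 1))) (hal n) htl))⟩
  choose x hx using hstep
  have hres : ∀ n, res x n = l n := fun n => by
    induction n with
    | zero => exact (List.length_eq_zero_iff.1 (hlen 0)).symm
    | succ n ih => rw [res_succ, ih, hx]
  exact ⟨x, fun n => hres n ▸ hal n⟩

section Metric

variable [MetricSpace α]

theorem vanishingDiam_of_dist_le
    (h : ∀ (x : ℕ → β) n, ∀ a ∈ A (res x (n + 1)), ∀ b ∈ A (res x (n + 1)),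
      dist a b ≤ (1 / 2 : ℝ) ^ n) : VanishingDiam A := by
  intro x
  rw [← tendsto_add_atTop_iff_nat 1]
  have hlim : Tendsto (fun n : ℕ => ENNReal.ofReal ((1 / 2 : ℝ) ^ n)) atTop (𝓝 0) := by
    simpa using ENNReal.tendsto_ofReal
      (tendsto_pow_atTop_nhds_zero_of_lt_one (by norm_num : (0 : ℝ) ≤ 1 / 2) (by norm_num))
  refine tendsto_of_tendsto_of_tendsto_of_le_of_le tendsto_const_nhds hlim (fun _ => bot_le)
    fun n => Metric.ediam_le fun a ha b hb => ?_
  rw [edist_dist]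
  exact ENNReal.ofReal_le_ofReal (h x n a ha b hb)

theorem VanishingDiam.eq_of_forall_mem (hdiam : VanishingDiam A) (x : ℕ → β) {a b : α}
    (ha : ∀ n, a ∈ A (res x n)) (hb : ∀ n, b ∈ A (res x n)) : a = b :=
  eq_of_forall_dist_le fun ε hε =>
    let ⟨n, hn⟩ := hdiam.dist_lt ε hε x
    (hn a (ha n) b (hb n)).le

theorem mem_range_inducedMap (hanti : CantorScheme.Antitone A)
    (hdisj : CantorScheme.Disjoint A) (hdiam : VanishingDiam A) {a : α}
    (ha : ∀ n, ∃ l : List β, l.length = n ∧ a ∈ A l) : a ∈ range (inducedMap A).2 := by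
  obtain ⟨x, hx⟩ := exists_branch hanti hdisj ha
  have hdom : x ∈ (inducedMap A).1 := ⟨a, mem_iInter.2 hx⟩
  exact ⟨⟨x, hdom⟩, hdiam.eq_of_forall_mem x (map_mem ⟨x, hdom⟩) hx⟩

theorem VanishingDiam.inducedMap_mem_of_isClosed (hdiam : VanishingDiam A) {C : Set α}
    (hC : IsClosed C) (hmeet : ∀ l, (A l ∩ C).Nonempty) (x : (inducedMap A).1) :
    (inducedMap A).2 x ∈ C := by
  refine hC.closure_subset (Metric.mem_closure_iff.2 fun ε hε => ?_)
  obtain ⟨n, hn⟩ := hdiam.dist_lt ε hε x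
  obtain ⟨c, hcA, hcC⟩ := hmeet (res x n)
  exact ⟨c, hcC, hn _ (map_mem x n) c hcA⟩

theorem isClosed_iUnion_length_eq (hclosed : ∀ l, IsClosed (A l)) (hopen : ∀ l, IsOpen (A l))
    (hanti : CantorScheme.Antitone A) (hdisj : CantorScheme.Disjoint A)
    (hlf : ∀ l, LocallyFinite fun b => A (b :: l)) (n : ℕ) :
    IsClosed (⋃ (l : List β) (_ : l.length = n), A l) := by
  induction n with
  | zero => simpa [List.length_eq_zero_iff] using hclosed []
  | succ n ih =>
    refine closure_subset_iff_isClosed.1 fun a ha => ?_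
    have hsucc : (⋃ (l : List β) (_ : l.length = n + 1), A l) ⊆
        ⋃ (l : List β) (_ : l.length = n), A l := by
      simp only [iUnion_subset_iff]
      rintro (_ | ⟨b, l⟩) hl c hc
      · simp at hl
      · exact mem_iUnion₂.2 ⟨l, by simpa using hl, hanti l b hc⟩
    obtain ⟨l, hl, hal⟩ := mem_iUnion₂.1 (ih.closure_subset (closure_mono hsucc ha))
    have hchildren : (⋃ (l' : List β) (_ : l'.length = n + 1), A l') ∩ A l ⊆ ⋃ b, A (b :: l) := by
      rintro c ⟨hc, hcl⟩
      obtain ⟨_ | ⟨b, t⟩, ht, hct⟩ := mem_iUnion₂.1 hc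
      · simp at ht
      · obtain rfl : t = l :=
          eq_of_mem_of_mem hanti hdisj (hanti t b hct) hcl (by simpa [hl] using ht)
        exact mem_iUnion.2 ⟨b, hct⟩
    obtain ⟨b, hb⟩ := mem_iUnion.1 <| ((hlf l).isClosed_iUnion fun b => hclosed _).closure_subset <|
      closure_mono hchildren ((hopen l).closure_inter ⟨ha, hal⟩)
    exact mem_iUnion₂.2 ⟨b :: l, by simp [hl], hb⟩

theorem isClosed_range_inducedMap (hclosed : ∀ l, IsClosed (A l)) (hopen : ∀ l, IsOpen (A l))
    (hanti : CantorScheme.Antitone A) (hdisj : CantorScheme.Disjoint A) (hdiam : VanishingDiam A)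
    (hlf : ∀ l, LocallyFinite fun b => A (b :: l)) : IsClosed (range (inducedMap A).2) := by
  have : range (inducedMap A).2 = ⋂ n, ⋃ (l : List β) (_ : l.length = n), A l := by
    refine subset_antisymm ?_ fun a ha => mem_range_inducedMap hanti hdisj hdiam fun n => ?_
    · rintro _ ⟨x, rfl⟩
      exact mem_iInter.2 fun n => mem_iUnion₂.2 ⟨res x n, res_length _ _, map_mem x n⟩
    · simpa using mem_iInter.1 ha n
  rw [this]
  exact isClosed_iInter (isClosed_iUnion_length_eq hclosed hopen hanti hdisj hlf)

variable [TopologicalSpace β] [DiscreteTopology β]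

theorem isEmbedding_inducedMap (hopen : ∀ l, IsOpen (A l)) (hanti : CantorScheme.Antitone A)
    (hdisj : CantorScheme.Disjoint A) (hdiam : VanishingDiam A) :
    IsEmbedding (inducedMap A).2 := by
  refine ⟨isInducing_iff_nhds.2 fun x => le_antisymm (hdiam.map_continuous.tendsto x).le_comap ?_,
    hdisj.map_injective⟩
  intro U hU
  rw [nhds_subtype] at hU
  obtain ⟨t, ht, htU⟩ := mem_comap.1 hU
  obtain ⟨_, ⟨y, n, rfl⟩, hxy, hsub⟩ := (isTopologicalBasis_cylinders _).mem_nhds_iff.1 ht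
  rw [← mem_cylinder_iff_eq.1 hxy] at hsub
  refine mem_comap.2 ⟨A (res x n), (hopen _).mem_nhds (map_mem x n), fun x' hx' => htU (hsub ?_)⟩
  have := (inducedMap_mem_iff hanti hdisj x' _).1 hx'
  rw [res_length] at this
  simpa [cylinder_eq_res] using this

theorem isClosed_inducedMap_domain [CompleteSpace α] (hclosed : ∀ l, IsClosed (A l))
    (hanti : CantorScheme.Antitone A) (hdiam : VanishingDiam A) : IsClosed (inducedMap A).1 := by
  refine closure_subset_iff_isClosed.1 fun y hy => ?_
  have hne : ∀ n, (A (res y n)).Nonempty := fun n => by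
    obtain ⟨x, hxy, hx⟩ := mem_closure_iff.1 hy _ (isOpen_cylinder _ y n) (self_mem_cylinder y n)
    rw [cylinder_eq_res] at hxy
    exact ⟨_, hxy ▸ map_mem ⟨x, hx⟩ n⟩
  -- Cantor's intersection theorem along `y`, from Mathlib's totality criterion applied to the
  -- scheme that is constant on each level.
  have htotal := ClosureAntitone.map_of_vanishingDiam (A := fun l : List β => A (res y l.length))
    (fun x => by simpa only [res_length] using hdiam y)
    (fun l b => by
      change closure (A (res y (l.length + 1))) ⊆ A (res y l.length)
      rw [(hclosed _).closure_eq, res_succ]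
      exact hanti _ _)
    (fun l => hne _)
  have := htotal.symm ▸ mem_univ y
  simpa only [inducedMap, res_length, mem_ofPred_eq] using this

end Metric

end CantorScheme

section ClopenScheme

variable {X : Type*} [MetricSpace X] [SecondCountableTopology X]

theorem exists_clopen_cover_of_dist_le (hbasis : IsTopologicalBasis {s : Set X | IsClopen s})
    {U : Set X} (hU : IsOpen U) {ε : ℝ} (hε : 0 < ε) :
    ∃ W : ℕ → Set X, (∀ n, IsClopen (W n)) ∧
      (∀ n, ∀ a ∈ W n, ∀ b ∈ W n, dist a b ≤ ε) ∧ ⋃ n, W n = U := by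
  set S := {s : Set X | IsClopen s ∧ s ⊆ U ∧ ∀ a ∈ s, ∀ b ∈ s, dist a b ≤ ε}
  have hS : ⋃₀ S = U := by
    refine subset_antisymm (sUnion_subset fun s hs => hs.2.1) fun x hx => ?_
    obtain ⟨t, ht, hxt, htU⟩ := hbasis.exists_subset_of_mem_open
      (⟨Metric.mem_ball_self (half_pos hε), hx⟩ : x ∈ Metric.ball x (ε / 2) ∩ U)
      (Metric.isOpen_ball.inter hU)
    refine ⟨t, ⟨ht, fun y hy => (htU hy).2, fun a ha b hb => ?_⟩, hxt⟩
    have := dist_triangle_right a b x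
    have := Metric.mem_ball.1 (htU ha).1
    have := Metric.mem_ball.1 (htU hb).1
    linarith
  obtain ⟨T, hTc, hTS, hTU⟩ := isOpen_sUnion_countable S fun s hs => hs.1.isOpen
  have hempty : ∅ ∈ S := ⟨isClopen_empty, empty_subset U, by simp⟩
  obtain ⟨W, hW⟩ := (hTc.insert ∅).exists_eq_range (insert_nonempty ∅ T)
  have hWS : ∀ n, W n ∈ S := fun n => insert_subset hempty hTS (hW ▸ mem_range_self n)
  refine ⟨W, fun n => (hWS n).1, fun n => (hWS n).2.2, ?_⟩
  rw [← sUnion_range, ← hW, sUnion_insert, empty_union, hTU, hS]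

theorem exists_clopen_partition_of_dist_le
    (hbasis : IsTopologicalBasis {s : Set X | IsClopen s}) {U : Set X} (hU : IsOpen U) {ε : ℝ}
    (hε : 0 < ε) :
    ∃ V : ℕ → Set X, (∀ n, IsClopen (V n)) ∧ Pairwise (Disjoint on V) ∧
      (∀ n, ∀ a ∈ V n, ∀ b ∈ V n, dist a b ≤ ε) ∧ ⋃ n, V n = U := by
  obtain ⟨W, hclopen, hsmall, hunion⟩ := exists_clopen_cover_of_dist_le hbasis hU hε
  refine ⟨disjointed W, fun n => disjointedRec (fun _ i ht => ht.diff (hclopen i)) (hclopen n),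
    disjoint_disjointed W, fun n a ha b hb => ?_, iUnion_disjointed.trans hunion⟩
  exact hsmall n a (disjointed_subset W n ha) b (disjointed_subset W n hb)

theorem exists_clopen_scheme (hbasis : IsTopologicalBasis {s : Set X | IsClopen s}) :
    ∃ D : List ℕ → Set X, D [] = univ ∧ (∀ l, IsClopen (D l)) ∧ CantorScheme.Antitone D ∧
      CantorScheme.Disjoint D ∧ (∀ l, ⋃ n, D (n :: l) = D l) ∧
      ∀ l n, ∀ a ∈ D (n :: l), ∀ b ∈ D (n :: l), dist a b ≤ (1 / 2 : ℝ) ^ l.length := by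
  choose P hP using fun (U : {U : Set X // IsClopen U}) (k : ℕ) =>
    exists_clopen_partition_of_dist_le hbasis U.2.isOpen (by positivity : (0 : ℝ) < (1 / 2) ^ k)
  let D : List ℕ → {U : Set X // IsClopen U} := fun l =>
    l.rec ⟨univ, isClopen_univ⟩ fun n l Dl => ⟨P Dl l.length n, (hP Dl _).1 n⟩
  have hD : ∀ n l, (D (n :: l)).1 = P (D l) l.length n := fun _ _ => rfl
  refine ⟨fun l => (D l).1, rfl, fun l => (D l).2, fun l n => ?_, fun l m n hmn => ?_,
    fun l => ?_, fun l n => ?_⟩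
  · change (D (n :: l)).1 ⊆ (D l).1
    rw [hD, ← (hP (D l) _).2.2.2]
    exact subset_iUnion _ n
  · simpa only [hD] using (hP (D l) _).2.1 hmn
  · simpa only [hD] using (hP (D l) _).2.2.2
  · simpa only [hD] using (hP (D l) _).2.2.1 n

end ClopenScheme

theorem exists_isClosedEmbedding_nat_nat_of_isClopen_basis (X : Type*) [TopologicalSpace X]
    [PolishSpace X] (hbasis : IsTopologicalBasis {s : Set X | IsClopen s}) :
    ∃ f : X → ℕ → ℕ, IsClosedEmbedding f := by
  let := upgradeIsCompletelyMetrizable X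
  obtain ⟨D, huniv, hclopen, hanti, hdisj, hcover, hsmall⟩ := exists_clopen_scheme hbasis
  have hdiam : VanishingDiam D := vanishingDiam_of_dist_le fun x n => by
    simpa only [res_succ, res_length] using hsmall (res x n) (x n)
  have hlevels : ∀ a : X, ∀ n, ∃ l : List ℕ, l.length = n ∧ a ∈ D l := fun a n => by
    induction n with
    | zero => exact ⟨[], rfl, huniv ▸ mem_univ a⟩
    | succ n ih =>
      obtain ⟨l, hl, hal⟩ := ih
      obtain ⟨k, hk⟩ := mem_iUnion.1 ((hcover l).symm ▸ hal)
      exact ⟨k :: l, by simp [hl], hk⟩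
  have hemb := isEmbedding_inducedMap (fun l => (hclopen l).isOpen) hanti hdisj hdiam
  let e := hemb.toHomeomorphOfSurjective fun a =>
    mem_range_inducedMap hanti hdisj hdiam (hlevels a)
  exact ⟨Subtype.val ∘ e.symm, (isClosed_inducedMap_domain (fun l => (hclopen l).isClosed)
    hanti hdiam).isClosedEmbedding_subtypeVal.comp e.symm.isClosedEmbedding⟩

namespace PiNat

variable {β : Type*}

def listCylinder (t : List β) : Set (ℕ → β) := {y | res y t.length = t}

theorem mem_listCylinder {t : List β} {y : ℕ → β} : y ∈ listCylinder t ↔ res y t.length = t :=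
  Iff.rfl

theorem res_suffix_res (y : ℕ → β) {m n : ℕ} (h : m ≤ n) : res y m <:+ res y n := by
  induction n, h using Nat.le_induction with
  | base => exact List.suffix_rfl
  | succ n _ ih => exact ih.trans (res_succ y n ▸ List.suffix_cons _ _)

theorem listCylinder_subset_listCylinder {s t : List β} (h : s <:+ t) :
    listCylinder t ⊆ listCylinder s := fun y hy => by
  have hyt : res y s.length <:+ t := mem_listCylinder.1 hy ▸ res_suffix_res y h.length_le
  exact (List.suffix_of_suffix_length_le hyt h (by rw [res_length])).eq_of_length (res_length _ _)

theorem disjoint_listCylinder_cons {a b : β} (h : a ≠ b) (t : List β) :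
    Disjoint (listCylinder (a :: t)) (listCylinder (b :: t)) :=
  disjoint_left.2 fun _ ha hb => h (List.cons.inj (ha.symm.trans hb)).1

variable [TopologicalSpace β] [DiscreteTopology β]

theorem isClopen_setOf_res_mem (T : Set (List β)) (n : ℕ) : IsClopen {y : ℕ → β | res y n ∈ T} := by
  have hopen : ∀ T : Set (List β), IsOpen {y : ℕ → β | res y n ∈ T} := fun T =>
    isOpen_iff_mem_nhds.2 fun y hy => mem_of_superset ((isOpen_cylinder _ y n).mem_nhds
      (self_mem_cylinder y n)) fun z hz => by
        rw [cylinder_eq_res] at hz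
        change res z n ∈ T
        rwa [show res z n = res y n from hz]
  exact ⟨isOpen_compl_iff.1 (hopen Tᶜ), hopen T⟩

theorem isClopen_listCylinder (t : List β) : IsClopen (listCylinder t) :=
  isClopen_setOf_res_mem {t} t.length

theorem locallyFinite_listCylinder_cons {ι : Type*} {c : ι → β} (hc : Injective c) (t : List β) :
    LocallyFinite fun i => listCylinder (c i :: t) := fun y => by
  refine ⟨cylinder y (t.length + 1), (isOpen_cylinder _ y _).mem_nhds (self_mem_cylinder y _),
    ((subsingleton_singleton (a := y t.length)).preimage hc).anti ?_ |>.finite⟩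
  rintro i ⟨z, hzi, hzy⟩
  rw [cylinder_eq_res] at hzy
  have : res z (t.length + 1) = c i :: t := hzi
  rw [show res z (t.length + 1) = res y (t.length + 1) from hzy, res_succ] at this
  exact (List.cons.inj this).1.symm

theorem isCompact_setOf_forall_res_mem [Inhabited β] {T : Set (List β)}
    (hT : ∀ n, {t ∈ T | t.length = n}.Finite) : IsCompact {y : ℕ → β | ∀ n, res y n ∈ T} := by
  have hK : IsCompact (univ.pi fun n => List.headI '' {t ∈ T | t.length = n + 1}) :=
    isCompact_univ_pi fun n => ((hT (n + 1)).image _).isCompact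
  refine hK.of_isClosed_subset (by
    rw [ofPred_forall]; exact isClosed_iInter fun n => (isClopen_setOf_res_mem T n).isClosed)
    fun y hy n _ => ⟨res y (n + 1), ⟨hy (n + 1), res_length _ _⟩, by rw [res_succ]; rfl⟩

end PiNat

namespace Hurewicz

variable {C : Set (ℕ → ℕ)}

def IsBigNode (C : Set (ℕ → ℕ)) (t : List ℕ) : Prop := ¬ IsSigmaCompact (C ∩ listCylinder t)

theorem IsBigNode.nonempty {t : List ℕ} (h : IsBigNode C t) : (C ∩ listCylinder t).Nonempty :=
  nonempty_iff_ne_empty.2 fun he => h (he ▸ isSigmaCompact_empty)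

theorem IsBigNode.of_suffix (hC : IsClosed C) {s t : List ℕ} (h : s <:+ t) (ht : IsBigNode C t) :
    IsBigNode C s := fun hs =>
  ht (hs.of_isClosed_subset (hC.inter (isClopen_listCylinder t).isClosed)
    (inter_subset_inter_right _ (listCylinder_subset_listCylinder h)))

def IsSplitting (C : Set (ℕ → ℕ)) (t : List ℕ) : Prop :=
  IsBigNode C t ∧ {k | IsBigNode C (k :: t)}.Infinite

theorem finite_levels_of_forall_finite (hC : IsClosed C) {s : List ℕ}
    (H : ∀ t, s <:+ t → IsBigNode C t → {k | IsBigNode C (k :: t)}.Finite) (n : ℕ) :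
    {t | (t <:+ s ∨ (s <:+ t ∧ IsBigNode C t)) ∧ t.length = n}.Finite := by
  have hsuffixes : {t : List ℕ | t <:+ s}.Finite :=
    s.tails.finite_toSet.subset fun t ht => (List.mem_tails _ _).2 ht
  induction n with
  | zero => exact (finite_singleton []).subset fun t ht => List.length_eq_zero_iff.1 ht.2
  | succ n ih =>
    have hbig : {t | (s <:+ t ∧ IsBigNode C t) ∧ t.length = n}.Finite :=
      ih.subset fun t ht => ⟨Or.inr ht.1, ht.2⟩
    refine (hsuffixes.union (hbig.biUnion fun t ht =>
      (H t ht.1.1 ht.1.2).image fun k => k :: t)).subset ?_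
    rintro u ⟨hu | ⟨hsu, hbu⟩, hlen⟩
    · exact Or.inl hu
    obtain ⟨k, t, rfl⟩ := List.exists_cons_of_length_eq_add_one hlen
    rcases List.suffix_cons_iff.1 hsu with rfl | hst
    · exact Or.inl List.suffix_rfl
    · exact Or.inr (mem_iUnion₂.2 ⟨t, ⟨⟨hst, hbu.of_suffix hC (List.suffix_cons k t)⟩,
        by simpa using hlen⟩, k, hbu, rfl⟩)

/-- Otherwise the big nodes extending `s` would form a finitely branching tree, whose compact set
of branches together with the countably many σ-compact sets `C ∩ listCylinder t`, `t` not big,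
would cover `C ∩ listCylinder s`. -/
theorem IsBigNode.exists_suffix_isSplitting (hC : IsClosed C) {s : List ℕ} (hs : IsBigNode C s) :
    ∃ t, s <:+ t ∧ IsSplitting C t := by
  by_contra! H
  simp only [IsSplitting, not_and, not_infinite] at H
  set T := {t : List ℕ | t <:+ s ∨ (s <:+ t ∧ IsBigNode C t)}
  have hK : IsCompact {y : ℕ → ℕ | ∀ n, res y n ∈ T} :=
    isCompact_setOf_forall_res_mem (finite_levels_of_forall_finite hC H)
  set smallPieces := ⋃ t : {t : List ℕ // s <:+ t ∧ ¬ IsBigNode C t}, C ∩ listCylinder t.1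
  have hsmallPieces : IsSigmaCompact smallPieces := isSigmaCompact_iUnion _ fun t => not_not.1 t.2.2
  have hcover : C ∩ listCylinder s ⊆ {y | ∀ n, res y n ∈ T} ∪ smallPieces := by
    rintro y ⟨hyC, hys⟩
    by_cases hy : ∀ n, res y n ∈ T
    · exact Or.inl hy
    obtain ⟨n, hn⟩ := not_forall.1 hy
    have hsn : s <:+ res y n := by
      rcases le_total n s.length with h | h
      · exact absurd (Or.inl (mem_listCylinder.1 hys ▸ res_suffix_res y h)) hn
      · exact mem_listCylinder.1 hys ▸ res_suffix_res y h
    exact Or.inr (mem_iUnion.2 ⟨⟨res y n, hsn, fun hbig => hn (Or.inr ⟨hsn, hbig⟩)⟩,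
      hyC, by rw [mem_listCylinder, res_length]⟩)
  refine hs (IsSigmaCompact.of_isClosed_subset ?_ (hC.inter (isClopen_listCylinder s).isClosed)
    hcover)
  rw [union_eq_iUnion]
  exact isSigmaCompact_iUnion _ fun b => by cases b <;> simp [hK.isSigmaCompact, hsmallPieces]

open Classical in
noncomputable def splittingNode (C : Set (ℕ → ℕ)) (s : List ℕ) : List ℕ :=
  if h : ∃ t, s <:+ t ∧ IsSplitting C t then h.choose else s

theorem suffix_splittingNode (s : List ℕ) : s <:+ splittingNode C s := by
  unfold splittingNode
  split_ifs with h
  exacts [h.choose_spec.1, List.suffix_rfl]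

theorem IsBigNode.isSplitting_splittingNode (hC : IsClosed C) {s : List ℕ} (hs : IsBigNode C s) :
    IsSplitting C (splittingNode C s) := by
  have h := hs.exists_suffix_isSplitting hC
  rw [splittingNode, dif_pos h]
  exact h.choose_spec.2

noncomputable def hurewiczNode (C : Set (ℕ → ℕ)) : List ℕ → List ℕ
  | [] => splittingNode C []
  | n :: u => splittingNode C
      (Nat.nth (fun k => IsBigNode C (k :: hurewiczNode C u)) n :: hurewiczNode C u)

theorem cons_suffix_hurewiczNode (n : ℕ) (u : List ℕ) :
    Nat.nth (fun k => IsBigNode C (k :: hurewiczNode C u)) n :: hurewiczNode C u <:+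
      hurewiczNode C (n :: u) :=
  suffix_splittingNode _

theorem hurewiczNode_suffix_cons (n : ℕ) (u : List ℕ) :
    hurewiczNode C u <:+ hurewiczNode C (n :: u) :=
  (List.suffix_cons _ _).trans (cons_suffix_hurewiczNode n u)

theorem length_le_length_hurewiczNode (u : List ℕ) : u.length ≤ (hurewiczNode C u).length := by
  induction u with
  | nil => exact Nat.zero_le _
  | cons n u ih =>
    have := (cons_suffix_hurewiczNode (C := C) n u).length_le
    simp only [List.length_cons] at this ⊢
    omega

theorem isSplitting_hurewiczNode (hC : IsClosed C) (h0 : IsBigNode C []) (u : List ℕ) :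
    IsSplitting C (hurewiczNode C u) := by
  induction u with
  | nil => exact h0.isSplitting_splittingNode hC
  | cons n u ih => exact (Nat.nth_mem_of_infinite ih.2 n).isSplitting_splittingNode hC

section Scheme

attribute [local instance] PiNat.metricSpaceNatNat

def hurewiczScheme (C : Set (ℕ → ℕ)) (u : List ℕ) : Set (ℕ → ℕ) := listCylinder (hurewiczNode C u)

theorem hurewiczScheme_cons_subset (n : ℕ) (u : List ℕ) :
    hurewiczScheme C (n :: u) ⊆
      listCylinder (Nat.nth (fun k => IsBigNode C (k :: hurewiczNode C u)) n :: hurewiczNode C u) :=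
  listCylinder_subset_listCylinder (cons_suffix_hurewiczNode n u)

theorem isClopen_hurewiczScheme (u : List ℕ) : IsClopen (hurewiczScheme C u) :=
  isClopen_listCylinder _

theorem antitone_hurewiczScheme : CantorScheme.Antitone (hurewiczScheme C) := fun u n =>
  listCylinder_subset_listCylinder (hurewiczNode_suffix_cons n u)

theorem vanishingDiam_hurewiczScheme : VanishingDiam (hurewiczScheme C) :=
  vanishingDiam_of_dist_le fun x n a ha b hb => by
    set L := hurewiczNode C (res x (n + 1))
    have hn : n ≤ L.length := by
      have := length_le_length_hurewiczNode (C := C) (res x (n + 1))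
      rw [res_length] at this
      exact (Nat.le_succ n).trans this
    have hab : b ∈ cylinder a L.length := by
      rw [cylinder_eq_res]
      exact (mem_listCylinder.1 hb).trans (mem_listCylinder.1 ha).symm
    rw [dist_comm]
    exact (mem_cylinder_iff_dist_le.1 hab).trans
      (pow_le_pow_of_le_one (by norm_num) (by norm_num) hn)

variable (hC : IsClosed C) (h0 : IsBigNode C [])
include hC h0

theorem disjoint_hurewiczScheme : CantorScheme.Disjoint (hurewiczScheme C) := fun u m n hmn =>
  (disjoint_listCylinder_cons ((Nat.nth_injective (isSplitting_hurewiczNode hC h0 u).2).ne hmn)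
    _).mono (hurewiczScheme_cons_subset m u) (hurewiczScheme_cons_subset n u)

theorem locallyFinite_hurewiczScheme (u : List ℕ) :
    LocallyFinite fun n => hurewiczScheme C (n :: u) :=
  (locallyFinite_listCylinder_cons (Nat.nth_injective (isSplitting_hurewiczNode hC h0 u).2)
    _).subset fun n => hurewiczScheme_cons_subset n u

theorem hurewiczScheme_inter_nonempty (u : List ℕ) : (hurewiczScheme C u ∩ C).Nonempty :=
  inter_comm C _ ▸ (isSplitting_hurewiczNode hC h0 u).1.nonempty

end Scheme

end Hurewicz

open Hurewicz in
theorem exists_isClosedEmbedding_subset_of_not_isSigmaCompact {C : Set (ℕ → ℕ)}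
    (hC : IsClosed C) (hns : ¬ IsSigmaCompact C) :
    ∃ g : (ℕ → ℕ) → ℕ → ℕ, IsClosedEmbedding g ∧ range g ⊆ C := by
  let := PiNat.metricSpaceNatNat
  have h0 : IsBigNode C [] := by simpa [IsBigNode, listCylinder] using hns
  have hclosed := fun u => (isClopen_hurewiczScheme (C := C) u).isClosed
  have hopen := fun u => (isClopen_hurewiczScheme (C := C) u).isOpen
  have hdiam := vanishingDiam_hurewiczScheme (C := C)
  have hdom : (inducedMap (hurewiczScheme C)).1 = univ :=
    (antitone_hurewiczScheme.closureAntitone hclosed).map_of_vanishingDiam hdiam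
      fun u => (hurewiczScheme_inter_nonempty hC h0 u).mono inter_subset_left
  let e : (ℕ → ℕ) ≃ₜ (inducedMap (hurewiczScheme C)).1 :=
    (Homeomorph.Set.univ _).symm.trans (Homeomorph.setCongr hdom.symm)
  refine ⟨(inducedMap (hurewiczScheme C)).2 ∘ e, ⟨(isEmbedding_inducedMap hopen
    antitone_hurewiczScheme (disjoint_hurewiczScheme hC h0) hdiam).comp e.isEmbedding, ?_⟩, ?_⟩
  · rw [e.surjective.range_comp]
    exact isClosed_range_inducedMap hclosed hopen antitone_hurewiczScheme
      (disjoint_hurewiczScheme hC h0) hdiam (locallyFinite_hurewiczScheme hC h0)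
  · rw [e.surjective.range_comp]
    rintro _ ⟨x, rfl⟩
    exact hdiam.inducedMap_mem_of_isClosed hC (hurewiczScheme_inter_nonempty hC h0) x

theorem exists_continuous_leftInverse_of_isClosedEmbedding {E : ℕ → Type*}
    [∀ n, TopologicalSpace (E n)] [∀ n, DiscreteTopology (E n)] {W : Type*} [TopologicalSpace W]
    [Nonempty W] {f : W → ∀ n, E n} (hf : IsClosedEmbedding f) :
    ∃ r : (∀ n, E n) → W, Continuous r ∧ LeftInverse r f := by
  obtain ⟨ρ, hρ, -, hρc⟩ :=
    exists_retraction_subtype_of_isClosed hf.isClosed_range (range_nonempty f)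
  let e := hf.isEmbedding.toHomeomorph
  refine ⟨e.symm ∘ ρ, e.symm.continuous.comp hρc, fun w => ?_⟩
  simp [e, hρ ⟨f w, mem_range_self w⟩]

theorem exists_continuous_isClosedEmbedding_comp_of_not_sigmaCompactSpace {X : Type*}
    [TopologicalSpace X] {f : X → ℕ → ℕ} (hf : IsClosedEmbedding f) (hns : ¬ SigmaCompactSpace X) :
    ∃ i : (ℕ → ℕ) → X, Continuous i ∧ IsClosedEmbedding (f ∘ i) := by
  have hns' : ¬ IsSigmaCompact (range f) := by
    rwa [← image_univ, ← hf.isEmbedding.isSigmaCompact_iff, isSigmaCompact_univ_iff]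
  obtain ⟨g, hg, hgf⟩ :=
    exists_isClosedEmbedding_subset_of_not_isSigmaCompact hf.isClosed_range hns'
  let e := hf.isEmbedding.toHomeomorph
  let g' := codRestrict g _ fun y => hgf (mem_range_self y)
  have hfi : f ∘ e.symm ∘ g' = g := funext fun y => congrArg Subtype.val (e.apply_symm_apply (g' y))
  exact ⟨e.symm ∘ g', e.symm.continuous.comp (hg.continuous.codRestrict _), hfi ▸ hg⟩

theorem cp_uniformly_homeomorphic_cp_baire_general
    (X : Type*) [TopologicalSpace X] [PolishSpace X]
    (hbasis : TopologicalSpace.IsTopologicalBasis {s : Set X | IsClopen s})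
    (hns : ¬ SigmaCompactSpace X) :
    Nonempty (Cp X ≃ᵤ Cp (ℕ → ℕ)) ∧ Nonempty (Cp X ≃ᵤ (Cp X × Cp X)) := by
  obtain ⟨f, hf⟩ := exists_isClosedEmbedding_nat_nat_of_isClopen_basis X hbasis
  obtain ⟨i, hi, hfi⟩ := exists_continuous_isClosedEmbedding_comp_of_not_sigmaCompactSpace hf hns
  have : Nonempty X := ⟨i default⟩
  obtain ⟨r, hr, hrf⟩ := exists_continuous_leftInverse_of_isClosedEmbedding hf
  obtain ⟨s, hs, hsfi⟩ := exists_continuous_leftInverse_of_isClosedEmbedding hfi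
  let e := UniformEquiv.ofPelczynski (Cp.equivProdOfLeftInverse hi (hs.comp hf.continuous) hsfi)
    (Cp.equivProdOfLeftInverse hf.continuous hr hrf) Cp.natNatEquivPi
  exact ⟨⟨e⟩, ⟨e.trans ((UniformEquiv.prodSelfOfPiNat Cp.natNatEquivPi).trans
    (e.symm.prodCongr e.symm))⟩⟩

/-- If `X` is an infinite Polish zero-dimensional space which is not
σ-compact, then `C_p(X)` is uniformly homeomorphic to `C_p(ω^ω)`, and in
particular to `C_p(X) × C_p(X)`. -/
theorem cp_uniformly_homeomorphic_cp_baire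
    (X : Type*) [TopologicalSpace X] [PolishSpace X] [Infinite X]
    (hbasis : TopologicalSpace.IsTopologicalBasis {s : Set X | IsClopen s})
    (hns : ¬ SigmaCompactSpace X) :
    Nonempty (Cp X ≃ᵤ Cp (ℕ → ℕ)) ∧ Nonempty (Cp X ≃ᵤ (Cp X × Cp X)) :=
  cp_uniformly_homeomorphic_cp_baire_general X hbasis hns
end

section
/- Let X be a separable metrizable zero-dimensional space and let F ⊆ X be a closed subspace. Suppose {U_n : n ∈ ℕ} is a family of pairwise disjoint nonempty subsets of F that are relatively open in F and compact, and suppose F = ⋃_n U_n. Then there exists a family {V_n : n ∈ ℕ} of pairwise disjoint clopen subsets of X covering ⋃_n U_n such that U_n = V_n ∩ F for every n. -/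
open Set

lemma exists_clopen_between_aux {X : Type*} [TopologicalSpace X]
    (hbasis : TopologicalSpace.IsTopologicalBasis {s : Set X | IsClopen s})
    {K V : Set X} (hK : IsCompact K) (hV : IsOpen V) (hKV : K ⊆ V) :
    ∃ s : Set X, IsClopen s ∧ K ⊆ s ∧ s ⊆ V := by
  choose f hf1 hf2 hf3 using fun x : K =>
    hbasis.exists_subset_of_mem_open (hKV x.2) hV
  obtain ⟨t, ht⟩ := hK.elim_finite_subcover f (fun x => (hf1 x).isOpen)
    (fun x hx => mem_iUnion.2 ⟨⟨x, hx⟩, hf2 _⟩)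
  refine ⟨⋃ x ∈ t, f x, ?_, ht, iUnion₂_subset fun x _ => hf3 _⟩
  exact isClopen_biUnion_finset fun x _ => hf1 x

/-- Separation lemma: if `F` is a closed subspace of a separable metrizable
zero-dimensional space `X` and `F = ⋃ n, U n` where the `U n` are pairwise
disjoint nonempty compact sets, relatively open in `F`, then there are
pairwise disjoint clopen sets `V n ⊆ X` covering `⋃ n, U n` with
`U n = V n ∩ F` for all `n`. -/
theorem exists_clopen_separation
    {X : Type*} [TopologicalSpace X] [TopologicalSpace.MetrizableSpace X]
    [TopologicalSpace.SeparableSpace X]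
    (hbasis : TopologicalSpace.IsTopologicalBasis {s : Set X | IsClopen s})
    (F : Set X) (hF : IsClosed F) (U : ℕ → Set X)
    (hdisj : Pairwise fun m n => Disjoint (U m) (U n))
    (hne : ∀ n, (U n).Nonempty) (hsub : ∀ n, U n ⊆ F)
    (hopen : ∀ n, ∃ W : Set X, IsOpen W ∧ U n = W ∩ F)
    (hcpt : ∀ n, IsCompact (U n)) (hcover : F = ⋃ n, U n) :
    ∃ V : ℕ → Set X, (Pairwise fun m n => Disjoint (V m) (V n)) ∧
      (∀ n, IsClopen (V n)) ∧ (⋃ n, U n) ⊆ (⋃ n, V n) ∧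
      ∀ n, U n = V n ∩ F := by
  -- F \ U n is closed
  have hclosed : ∀ n, IsClosed (F \ U n) := by
    intro n
    obtain ⟨W, hW, hUW⟩ := hopen n
    have : F \ U n = F ∩ Wᶜ := by
      rw [hUW]; ext x; simp only [mem_diff, mem_inter_iff, mem_compl_iff]; tauto
    rw [this]
    exact hF.inter hW.isClosed_compl
  -- choose clopen K n with U n ⊆ K n ⊆ (F \ U n)ᶜ
  have hK : ∀ n, ∃ K : Set X, IsClopen K ∧ U n ⊆ K ∧ K ⊆ (F \ U n)ᶜ := by
    intro n
    refine exists_clopen_between_aux hbasis (hcpt n) (hclosed n).isOpen_compl ?_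
    intro x hx hx'
    exact hx'.2 hx
  choose K hKclopen hUK hKcompl using hK
  have hKF : ∀ n, K n ∩ F = U n := by
    intro n
    apply Subset.antisymm
    · rintro x ⟨hxK, hxF⟩
      by_contra hxU
      exact hKcompl n hxK ⟨hxF, hxU⟩
    · exact subset_inter (hUK n) (hsub n)
  -- disjointify
  refine ⟨fun n => K n \ ⋃ m ∈ Finset.range n, K m, ?_, ?_, ?_, ?_⟩
  · intro m n hmn
    rcases hmn.lt_or_gt with h | h
    · refine Set.disjoint_left.2 fun x hxm hxn => ?_
      exact hxn.2 (mem_biUnion (Finset.mem_range.2 h) hxm.1)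
    · refine Set.disjoint_left.2 fun x hxm hxn => ?_
      exact hxm.2 (mem_biUnion (Finset.mem_range.2 h) hxn.1)
  · intro n
    exact (hKclopen n).diff (isClopen_biUnion_finset fun m _ => hKclopen m)
  · refine iUnion_subset fun n x hx => mem_iUnion.2 ⟨n, (hUK n) hx, ?_⟩
    intro hx'
    obtain ⟨m, hm, hxm⟩ := by simpa using hx'
    have hxUm : x ∈ U m := (hKF m) ▸ ⟨hxm, hsub n hx⟩
    exact Set.disjoint_left.1 (hdisj (Nat.ne_of_lt hm).symm) hx hxUm
  · intro n
    apply Subset.antisymm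
    · intro x hx
      refine ⟨⟨(hUK n) hx, ?_⟩, hsub n hx⟩
      intro hx'
      obtain ⟨m, hm, hxm⟩ := by simpa using hx'
      have hxUm : x ∈ U m := (hKF m) ▸ ⟨hxm, hsub n hx⟩
      exact Set.disjoint_left.1 (hdisj (Nat.ne_of_lt hm).symm) hx hxUm
    · rintro x ⟨⟨hxK, _⟩, hxF⟩
      exact (hKF n) ▸ ⟨hxK, hxF⟩
end
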